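/- arXiv:1701.05967 — 4 statements merged into one kernel-verified Lean document; each statement's English description precedes it below -/
import Mathlib

section
/- Let (Ω, F, ℙ) be a probability space, Φ an Orlicz function with conjugate Ψ, X ∈ L^Φ and Y ∈ L^Ψ with Y ≥ 0. Then the net of conditional expectations over finite measurable partitions satisfies E[|E[X|π] − X|·Y] → 0, where the partitions π are directed by refinement. -/
open MeasureTheory ENNReal Filter Set

noncomputable section

namespace OrliczPaper

/-- An Orlicz function: convex, increasing, nonnegative, vanishing at zero. -/
def IsOrliczFunction (Φ : ℝ → ℝ) : Prop :=
  ConvexOn ℝ (Set.Ici (0:ℝ)) Φ ∧ MonotoneOn Φ (Set.Ici (0:ℝ)) ∧ Φ 0 = 0 ∧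
    ∀ t : ℝ, 0 ≤ t → 0 ≤ Φ t

/-- Standing assumptions of the paper: `Φ(t) > 0` for `t > 0` and `Φ(t)/t → ∞`. -/
def StandingAssumptions (Φ : ℝ → ℝ) : Prop :=
  (∀ t : ℝ, 0 < t → 0 < Φ t) ∧ Tendsto (fun t : ℝ => Φ t / t) atTop atTop

/-- The conjugate Orlicz function `Ψ(s) = sup { t * s - Φ t : t ≥ 0 }`. -/
def conjugate (Φ : ℝ → ℝ) (s : ℝ) : ℝ :=
  sSup {y : ℝ | ∃ t : ℝ, 0 ≤ t ∧ y = t * s - Φ t}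

/-- The Δ₂ condition. -/
def Delta2 (Φ : ℝ → ℝ) : Prop :=
  ∃ t₀ : ℝ, 0 < t₀ ∧ ∃ k : ℝ, ∀ t : ℝ, t₀ ≤ t → Φ (2 * t) ≤ k * Φ t

/-- Nonatomicity of a measure: every measurable set contains measurable subsets of any
smaller prescribed measure. -/
def Nonatomic {Ω : Type*} [MeasurableSpace Ω] (μ : Measure Ω) : Prop :=
  ∀ A : Set Ω, MeasurableSet A → ∀ r : ℝ≥0∞, r ≤ μ A →
    ∃ B ⊆ A, MeasurableSet B ∧ μ B = r

variable {Ω : Type*} [MeasurableSpace Ω]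

/-- The Orlicz modular at scale `l`. -/
def modular (Φ : ℝ → ℝ) (μ : Measure Ω) (X : Ω → ℝ) (l : ℝ) : ℝ≥0∞ :=
  ∫⁻ ω, ENNReal.ofReal (Φ (|X ω| / l)) ∂μ

/-- The Luxemburg norm. -/
def luxNorm (Φ : ℝ → ℝ) (μ : Measure Ω) (X : Ω → ℝ) : ℝ≥0∞ :=
  sInf {l : ℝ≥0∞ | 0 < l ∧ l ≠ ∞ ∧ modular Φ μ X l.toReal ≤ 1}

/-- Membership in the Orlicz space `L^Φ`. -/
def MemOrlicz (Φ : ℝ → ℝ) (μ : Measure Ω) (X : Ω → ℝ) : Prop :=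
  Measurable X ∧ luxNorm Φ μ X < ∞

/-- Membership in the Orlicz heart `H^Φ`. -/
def MemHeart (Φ : ℝ → ℝ) (μ : Measure Ω) (X : Ω → ℝ) : Prop :=
  Measurable X ∧ ∀ l : ℝ, 0 < l → modular Φ μ X l < ∞

/-- Essentially bounded random variables (`L^∞`). -/
def MemBdd (μ : Measure Ω) (X : Ω → ℝ) : Prop :=
  Measurable X ∧ ∃ c : ℝ, ∀ᵐ ω ∂μ, |X ω| ≤ c

/-- A finite measurable partition of `Ω` into sets of positive measure. -/
def IsFinPartition (μ : Measure Ω) (π : Finset (Set Ω)) : Prop :=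
  (∀ A ∈ π, MeasurableSet A) ∧ (∀ A ∈ π, 0 < μ A) ∧
    ((π : Set (Set Ω)).PairwiseDisjoint id) ∧ ⋃₀ (π : Set (Set Ω)) = Set.univ

/-- `π'` refines `π`: every member of `π'` is contained in some member of `π`. -/
def Refines (π' π : Finset (Set Ω)) : Prop :=
  ∀ A ∈ π', ∃ B ∈ π, A ⊆ B

/-- Conditional expectation with respect to the σ-algebra generated by a partition. -/
def partCE (μ : Measure Ω) (X : Ω → ℝ) (π : Finset (Set Ω)) : Ω → ℝ :=
  μ[X | MeasurableSpace.generateFrom (π : Set (Set Ω))]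

/-- Two random variables have the same law. -/
def SameLaw (μ : Measure Ω) (X Y : Ω → ℝ) : Prop :=
  Measure.map X μ = Measure.map Y μ

/-- Law-invariant subset of `L^Φ`. -/
def LawInvariantSet (Φ : ℝ → ℝ) (μ : Measure Ω) (C : Set (Ω → ℝ)) : Prop :=
  ∀ X ∈ C, ∀ Y : Ω → ℝ, MemOrlicz Φ μ Y → SameLaw μ X Y → Y ∈ C

/-- Sequential order convergence in `L^Φ`: dominated almost sure convergence. -/
def OrderConvSeq (Φ : ℝ → ℝ) (μ : Measure Ω) (X : ℕ → Ω → ℝ) (X₀ : Ω → ℝ) : Prop :=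
  (∀ᵐ ω ∂μ, Tendsto (fun n => X n ω) atTop (nhds (X₀ ω))) ∧
    ∃ Y : Ω → ℝ, MemOrlicz Φ μ Y ∧ ∀ n, ∀ᵐ ω ∂μ, |X n ω| ≤ Y ω

/-- Order closed subset of `L^Φ`. -/
def OrderClosedSet (Φ : ℝ → ℝ) (μ : Measure Ω) (C : Set (Ω → ℝ)) : Prop :=
  ∀ (X : ℕ → Ω → ℝ) (X₀ : Ω → ℝ), (∀ n, X n ∈ C) → MemOrlicz Φ μ X₀ →
    OrderConvSeq Φ μ X X₀ → X₀ ∈ C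

/-- Closedness in the Luxemburg norm topology (sequential, the topology being metrizable). -/
def NormClosedSet (Φ : ℝ → ℝ) (μ : Measure Ω) (C : Set (Ω → ℝ)) : Prop :=
  ∀ (X : ℕ → Ω → ℝ) (X₀ : Ω → ℝ), (∀ n, X n ∈ C) → MemOrlicz Φ μ X₀ →
    Tendsto (fun n => luxNorm Φ μ (fun ω => X n ω - X₀ ω)) atTop (nhds 0) → X₀ ∈ C

/-- Closedness of `C ⊆ L^Φ` in the weak topology `σ(L^Φ, E)` induced by the
pairing `(X, Y) ↦ E[XY]` with `Y` ranging over `E`. -/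
def WeakClosedSet (Φ : ℝ → ℝ) (μ : Measure Ω) (E : Set (Ω → ℝ)) (C : Set (Ω → ℝ)) : Prop :=
  ∀ X : Ω → ℝ, MemOrlicz Φ μ X → X ∉ C →
    ∃ s : Finset (Ω → ℝ), (↑s : Set (Ω → ℝ)) ⊆ E ∧ ∃ ε : ℝ, 0 < ε ∧
      ∀ X' : Ω → ℝ, MemOrlicz Φ μ X' →
        (∀ Y ∈ s, |∫ ω, (X' ω - X ω) * Y ω ∂μ| < ε) → X' ∉ C

/-- Properness of a functional on `L^Φ`: never `-∞` and finite somewhere. -/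
def ProperFun (Φ : ℝ → ℝ) (μ : Measure Ω) (ρ : (Ω → ℝ) → EReal) : Prop :=
  (∀ X : Ω → ℝ, MemOrlicz Φ μ X → ρ X ≠ ⊥) ∧ ∃ X : Ω → ℝ, MemOrlicz Φ μ X ∧ ρ X ≠ ⊤

def ConvexFun (Φ : ℝ → ℝ) (μ : Measure Ω) (ρ : (Ω → ℝ) → EReal) : Prop :=
  ∀ X Y : Ω → ℝ, MemOrlicz Φ μ X → MemOrlicz Φ μ Y → ∀ t : ℝ, 0 ≤ t → t ≤ 1 →
    ρ (fun ω => t * X ω + (1 - t) * Y ω) ≤ (t : EReal) * ρ X + ((1 - t : ℝ) : EReal) * ρ Y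

def QuasiconvexFun (Φ : ℝ → ℝ) (μ : Measure Ω) (ρ : (Ω → ℝ) → EReal) : Prop :=
  ∀ c : ℝ, Convex ℝ {X : Ω → ℝ | MemOrlicz Φ μ X ∧ ρ X ≤ (c : EReal)}

def LawInvariantFun (Φ : ℝ → ℝ) (μ : Measure Ω) (ρ : (Ω → ℝ) → EReal) : Prop :=
  ∀ X Y : Ω → ℝ, MemOrlicz Φ μ X → MemOrlicz Φ μ Y → SameLaw μ X Y → ρ X = ρ Y

/-- The Fatou property on `L^Φ`. -/
def FatouProperty (Φ : ℝ → ℝ) (μ : Measure Ω) (ρ : (Ω → ℝ) → EReal) : Prop :=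
  ∀ (X : ℕ → Ω → ℝ) (X₀ : Ω → ℝ), (∀ n, MemOrlicz Φ μ (X n)) → MemOrlicz Φ μ X₀ →
    OrderConvSeq Φ μ X X₀ → ρ X₀ ≤ liminf (fun n => ρ (X n)) atTop

/-- Norm lower semicontinuity: sublevel sets are norm closed. -/
def NormLSC (Φ : ℝ → ℝ) (μ : Measure Ω) (ρ : (Ω → ℝ) → EReal) : Prop :=
  ∀ c : ℝ, NormClosedSet Φ μ {X : Ω → ℝ | MemOrlicz Φ μ X ∧ ρ X ≤ (c : EReal)}

/-- Lower semicontinuity with respect to `σ(L^Φ, E)`: sublevel sets are weakly closed. -/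
def WeakLSC (Φ : ℝ → ℝ) (μ : Measure Ω) (E : Set (Ω → ℝ)) (ρ : (Ω → ℝ) → EReal) : Prop :=
  ∀ c : ℝ, WeakClosedSet Φ μ E {X : Ω → ℝ | MemOrlicz Φ μ X ∧ ρ X ≤ (c : EReal)}

def CashAdditive (Φ : ℝ → ℝ) (μ : Measure Ω) (ρ : (Ω → ℝ) → EReal) : Prop :=
  ∀ X : Ω → ℝ, MemOrlicz Φ μ X → ∀ m : ℝ, ρ (fun ω => X ω + m) = ρ X - (m : EReal)

/-- Monotone decreasing: larger positions have smaller risk. -/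
def MonotoneFun (Φ : ℝ → ℝ) (μ : Measure Ω) (ρ : (Ω → ℝ) → EReal) : Prop :=
  ∀ X Y : Ω → ℝ, MemOrlicz Φ μ X → MemOrlicz Φ μ Y → (∀ᵐ ω ∂μ, Y ω ≤ X ω) → ρ X ≤ ρ Y

def PositivelyHomogeneous (Φ : ℝ → ℝ) (μ : Measure Ω) (ρ : (Ω → ℝ) → EReal) : Prop :=
  ∀ X : Ω → ℝ, MemOrlicz Φ μ X → ∀ c : ℝ, 0 ≤ c → ρ (fun ω => c * X ω) = (c : EReal) * ρ X

/-- Value-at-Risk at level `β`. -/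
def VaR (μ : Measure Ω) (X : Ω → ℝ) (β : ℝ) : ℝ :=
  sInf {m : ℝ | μ {ω | X ω + m < 0} ≤ ENNReal.ofReal β}

/-- Expected Shortfall at level `α`. -/
def ES (μ : Measure Ω) (X : Ω → ℝ) (α : ℝ) : ℝ :=
  (1 / α) * ∫ β in (0:ℝ)..α, VaR μ X β

section Conj
variable {Φ : ℝ → ℝ}

lemma conj_bddAbove (hΦ : IsOrliczFunction Φ) (hΦ' : StandingAssumptions Φ) (s : ℝ) :
    BddAbove {y : ℝ | ∃ t : ℝ, 0 ≤ t ∧ y = t * s - Φ t} := by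
  obtain ⟨T, hT⟩ := eventually_atTop.1 (hΦ'.2.eventually_ge_atTop (s + 1))
  refine ⟨max T 1 * |s|, ?_⟩
  rintro y ⟨t, ht, rfl⟩
  by_cases h : t ≤ max T 1
  · calc t * s - Φ t ≤ t * s := by linarith [hΦ.2.2.2 t ht]
    _ ≤ |t * s| := le_abs_self _
    _ = t * |s| := by rw [abs_mul, abs_of_nonneg ht]
    _ ≤ max T 1 * |s| := mul_le_mul_of_nonneg_right h (abs_nonneg s)
  · push_neg at h
    have ht1 : (1:ℝ) < t := lt_of_le_of_lt (le_max_right T 1) h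
    have h2 := hT t (le_of_lt (lt_of_le_of_lt (le_max_left T 1) h))
    have htpos : (0:ℝ) < t := by linarith
    rw [le_div_iff₀ htpos] at h2
    have h3 : t * s - (s+1) * t = -t := by ring
    have h4 : (0:ℝ) ≤ max T 1 * |s| :=
      mul_nonneg (le_trans zero_le_one (le_max_right T 1)) (abs_nonneg s)
    linarith

lemma le_conj (hΦ : IsOrliczFunction Φ) (hΦ' : StandingAssumptions Φ) {t : ℝ} (ht : 0 ≤ t)
    (s : ℝ) : t * s - Φ t ≤ conjugate Φ s :=
  le_csSup (conj_bddAbove hΦ hΦ' s) ⟨t, ht, rfl⟩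

lemma conj_nonneg (hΦ : IsOrliczFunction Φ) (hΦ' : StandingAssumptions Φ) (s : ℝ) :
    0 ≤ conjugate Φ s := by
  have := le_conj hΦ hΦ' (le_refl (0:ℝ)) s
  simpa [hΦ.2.2.1] using this

lemma young (hΦ : IsOrliczFunction Φ) (hΦ' : StandingAssumptions Φ) {t : ℝ} (ht : 0 ≤ t)
    (s : ℝ) : t * s ≤ Φ t + conjugate Φ s := by
  linarith [le_conj hΦ hΦ' ht s]

lemma conj_monotone (hΦ : IsOrliczFunction Φ) (hΦ' : StandingAssumptions Φ) :
    Monotone (conjugate Φ) := by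
  intro s₁ s₂ hs
  refine csSup_le ⟨0 * s₁ - Φ 0, 0, le_refl _, rfl⟩ ?_
  rintro y ⟨t, ht, rfl⟩
  calc t * s₁ - Φ t ≤ t * s₂ - Φ t := by
        have := mul_le_mul_of_nonneg_left hs ht; linarith
  _ ≤ conjugate Φ s₂ := le_conj hΦ hΦ' ht s₂

/-- Jensen for the conjugate function at averages, via the sup-of-affine structure. -/
lemma conj_avg_le (hΦ : IsOrliczFunction Φ) (hΦ' : StandingAssumptions Φ)
    {μ : Measure Ω} [IsFiniteMeasure μ] {B : Set Ω}
    (hB0 : μ B ≠ 0) {Z : Ω → ℝ}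
    (hZ : IntegrableOn Z B μ) (hcZ : IntegrableOn (fun ω => conjugate Φ (Z ω)) B μ) :
    conjugate Φ ((∫ ω in B, Z ω ∂μ) / (μ B).toReal) ≤
      (∫ ω in B, conjugate Φ (Z ω) ∂μ) / (μ B).toReal := by
  have hbpos : 0 < (μ B).toReal := ENNReal.toReal_pos hB0 (measure_ne_top μ B)
  refine csSup_le ⟨0 * _ - Φ 0, 0, le_refl _, rfl⟩ ?_
  rintro y ⟨t, ht, rfl⟩
  have hconst : IntegrableOn (fun _ : Ω => Φ t) B μ :=
    integrableOn_const (measure_ne_top μ B) enorm_ne_top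
  have key : ∫ ω in B, (t * Z ω - Φ t) ∂μ ≤ ∫ ω in B, conjugate Φ (Z ω) ∂μ :=
    integral_mono ((hZ.const_mul t).sub hconst) hcZ (fun ω => le_conj hΦ hΦ' ht (Z ω))
  rw [integral_sub (hZ.const_mul t) hconst, integral_const_mul, setIntegral_const] at key
  simp only [smul_eq_mul, measureReal_def] at key
  rw [sub_le_iff_le_add, div_add' _ _ _ (ne_of_gt hbpos), le_div_iff₀ hbpos] at *
  have h5 : t * ((∫ ω in B, Z ω ∂μ) / (μ B).toReal) * (μ B).toReal = t * ∫ ω in B, Z ω ∂μ := by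
    field_simp
  rw [h5]
  linarith

end Conj

lemma exists_scale {Φ : ℝ → ℝ} {μ : Measure Ω} {W : Ω → ℝ} (h : MemOrlicz Φ μ W) :
    ∃ l : ℝ, 0 < l ∧ modular Φ μ W l ≤ 1 := by
  obtain ⟨hm, hfin⟩ := h
  have hne : {l : ℝ≥0∞ | 0 < l ∧ l ≠ ∞ ∧ modular Φ μ W l.toReal ≤ 1}.Nonempty := by
    by_contra hc
    rw [not_nonempty_iff_eq_empty] at hc
    rw [luxNorm, hc, sInf_empty] at hfin
    exact lt_irrefl _ hfin
  obtain ⟨l, hl0, hlt, hmod⟩ := hne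
  exact ⟨l.toReal, ENNReal.toReal_pos hl0.ne' hlt, hmod⟩


section Pack
variable {Φ : ℝ → ℝ}

lemma comp_monotoneOn_measurable {W : Ω → ℝ} (hW : Measurable W) (hW0 : ∀ ω, 0 ≤ W ω)
    {F : ℝ → ℝ} (hmono : MonotoneOn F (Set.Ici (0:ℝ))) :
    Measurable fun ω => F (W ω) := by
  have h1 : Monotone fun t => F (max t 0) := fun a b hab =>
    hmono (mem_Ici.2 (le_max_right a 0)) (mem_Ici.2 (le_max_right b 0)) (max_le_max hab le_rfl)
  have h2 := h1.measurable.comp hW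
  have heq : (fun ω => F (W ω)) = fun ω => F (max (W ω) 0) := by
    funext ω; rw [max_eq_left (hW0 ω)]
  rw [heq]; exact h2

lemma integrable_of_lintegral_le {μ : Measure Ω} {W : Ω → ℝ} (hm : Measurable W)
    (h0 : ∀ ω, 0 ≤ W ω) (hb : ∫⁻ ω, ENNReal.ofReal (W ω) ∂μ ≤ 1) : Integrable W μ := by
  refine ⟨hm.aestronglyMeasurable, ?_⟩
  rw [hasFiniteIntegral_iff_ofReal (ae_of_all μ h0)]
  exact lt_of_le_of_lt hb one_lt_top

lemma exists_linear_lb (hΦ : IsOrliczFunction Φ) (hΦ' : StandingAssumptions Φ) :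
    ∃ c : ℝ, 0 ≤ c ∧ ∀ s, 0 ≤ s → s ≤ c + Φ s := by
  obtain ⟨T, hT⟩ := eventually_atTop.1 (hΦ'.2.eventually_ge_atTop 1)
  refine ⟨max T 1, le_trans zero_le_one (le_max_right T 1), fun s hs => ?_⟩
  by_cases h : s ≤ max T 1
  · linarith [hΦ.2.2.2 s hs]
  · push_neg at h
    have hspos : (0:ℝ) < s := lt_of_lt_of_le (lt_of_lt_of_le zero_lt_one (le_max_right T 1)) h.le
    have h2 := hT s (le_trans (le_max_left T 1) h.le)
    rw [le_div_iff₀ hspos, one_mul] at h2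
    linarith [le_trans zero_le_one (le_max_right T 1)]

lemma modular_pack {μ : Measure Ω} [IsProbabilityMeasure μ] {F : ℝ → ℝ}
    (hmono : MonotoneOn F (Set.Ici (0:ℝ))) (hnn : ∀ s, 0 ≤ s → 0 ≤ F s)
    {c : ℝ} (hc : ∀ s, 0 ≤ s → s ≤ c + F s)
    {W : Ω → ℝ} (hW : Measurable W) (hW0 : ∀ ω, 0 ≤ W ω) {l : ℝ} (hl : 0 < l)
    (hmod : ∫⁻ ω, ENNReal.ofReal (F (W ω / l)) ∂μ ≤ 1) :
    Integrable (fun ω => F (W ω / l)) μ ∧ Integrable W μ := by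
  have hWl : Measurable fun ω => W ω / l := hW.div_const l
  have hWl0 : ∀ ω, 0 ≤ W ω / l := fun ω => div_nonneg (hW0 ω) hl.le
  have hFm : Measurable fun ω => F (W ω / l) := comp_monotoneOn_measurable hWl hWl0 hmono
  have hFint : Integrable (fun ω => F (W ω / l)) μ :=
    integrable_of_lintegral_le hFm (fun ω => hnn _ (hWl0 ω)) hmod
  refine ⟨hFint, ?_⟩
  have hbound : ∀ ω, ‖W ω‖ ≤ l * c + l * F (W ω / l) := by
    intro ω
    rw [Real.norm_eq_abs, abs_of_nonneg (hW0 ω)]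
    calc W ω = l * (W ω / l) := by field_simp
    _ ≤ l * (c + F (W ω / l)) := mul_le_mul_of_nonneg_left (hc _ (hWl0 ω)) hl.le
    _ = l * c + l * F (W ω / l) := by ring
  exact Integrable.mono' ((integrable_const (l * c)).add (hFint.const_mul l))
    hW.aestronglyMeasurable (ae_of_all μ hbound)

end Pack

def pAvg (μ : Measure Ω) (X : Ω → ℝ) (π : Finset (Set Ω)) : Ω → ℝ :=
  fun ω => ∑ B ∈ π, Set.indicator B (fun _ => (∫ x in B, X x ∂μ) / (μ B).toReal) ω

section Partition
variable {μ : Measure Ω} {π : Finset (Set Ω)}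

lemma IsFinPartition.exists_mem (hπ : IsFinPartition μ π) (ω : Ω) : ∃ B ∈ π, ω ∈ B := by
  have h : ω ∈ ⋃₀ (π : Set (Set Ω)) := hπ.2.2.2 ▸ mem_univ ω
  obtain ⟨B, hB, hω⟩ := h
  exact ⟨B, Finset.mem_coe.1 hB, hω⟩

lemma IsFinPartition.disj (hπ : IsFinPartition μ π) {B C : Set Ω} (hB : B ∈ π) (hC : C ∈ π)
    (hne : B ≠ C) : Disjoint B C :=
  hπ.2.2.1 (Finset.mem_coe.2 hB) (Finset.mem_coe.2 hC) hne

lemma pAvg_apply (hπ : IsFinPartition μ π) (f : Ω → ℝ) {B : Set Ω} (hB : B ∈ π) {ω : Ω}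
    (hω : ω ∈ B) : pAvg μ f π ω = (∫ x in B, f x ∂μ) / (μ B).toReal := by
  rw [pAvg, Finset.sum_eq_single_of_mem B hB]
  · exact indicator_of_mem hω _
  · intro C hC hne
    exact indicator_of_notMem (fun hωC => Set.disjoint_left.1 (hπ.disj hC hB hne) hωC hω) _

lemma pAvg_measurable (hπ : IsFinPartition μ π) (f : Ω → ℝ) : Measurable (pAvg μ f π) := by
  refine Finset.measurable_sum π (fun B hB => ?_)
  exact measurable_const.indicator (hπ.1 B hB)

lemma pAvg_bound (hπ : IsFinPartition μ π) (f : Ω → ℝ) (ω : Ω) :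
    |pAvg μ f π ω| ≤ ∑ B ∈ π, |(∫ x in B, f x ∂μ) / (μ B).toReal| := by
  refine le_trans (Finset.abs_sum_le_sum_abs _ _) (Finset.sum_le_sum (fun B hB => ?_))
  by_cases h : ω ∈ B
  · rw [indicator_of_mem h]
  · rw [indicator_of_notMem h]
    simp

lemma pAvg_integrable [IsFiniteMeasure μ] (hπ : IsFinPartition μ π) (f : Ω → ℝ) :
    Integrable (pAvg μ f π) μ := by
  refine integrable_finset_sum π (fun B hB => ?_)
  exact (integrable_const _).indicator (hπ.1 B hB)

lemma measurableSet_partition (hπ : IsFinPartition μ π) {s : Set Ω}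
    (hs : MeasurableSet[MeasurableSpace.generateFrom (π : Set (Set Ω))] s) :
    ∃ T : Finset (Set Ω), T ⊆ π ∧ s = ⋃₀ (T : Set (Set Ω)) := by
  classical
  refine MeasurableSpace.generateFrom_induction (π : Set (Set Ω))
    (fun s _ => ∃ T : Finset (Set Ω), T ⊆ π ∧ s = ⋃₀ (T : Set (Set Ω))) ?_ ?_ ?_ ?_ s hs
  · intro t ht _
    exact ⟨{t}, Finset.singleton_subset_iff.2 (Finset.mem_coe.1 ht), by simp⟩
  · exact ⟨∅, Finset.empty_subset _, by simp⟩
  · rintro t ht ⟨T, hT, rfl⟩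
    refine ⟨π \ T, Finset.sdiff_subset, ?_⟩
    ext ω
    simp only [mem_compl_iff, mem_sUnion, Finset.mem_coe]
    constructor
    · intro hω
      obtain ⟨B, hB, hωB⟩ := hπ.exists_mem ω
      have hBT : B ∉ T := fun h => hω ⟨B, h, hωB⟩
      exact ⟨B, Finset.mem_sdiff.2 ⟨hB, hBT⟩, hωB⟩
    · rintro ⟨B, hB, hωB⟩ ⟨C, hC, hωC⟩
      rw [Finset.mem_sdiff] at hB
      have hne : B ≠ C := fun h => hB.2 (h ▸ hC)
      exact Set.disjoint_left.1 (hπ.disj hB.1 (hT hC) hne) hωB hωC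
  · intro f hf ih
    choose T hT hTeq using ih
    refine ⟨π.filter (fun B => ∃ n, B ∈ T n), Finset.filter_subset _ _, ?_⟩
    ext ω
    simp only [mem_iUnion, mem_sUnion, Finset.mem_coe, Finset.mem_filter]
    constructor
    · rintro ⟨n, hωn⟩
      rw [hTeq n] at hωn
      obtain ⟨B, hB, hωB⟩ := hωn
      exact ⟨B, ⟨hT n (Finset.mem_coe.1 hB), ⟨n, Finset.mem_coe.1 hB⟩⟩, hωB⟩
    · rintro ⟨B, ⟨hBπ, n, hBn⟩, hωB⟩
      refine ⟨n, ?_⟩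
      rw [hTeq n]
      exact ⟨B, Finset.mem_coe.2 hBn, hωB⟩

lemma sum_setIntegral_inter [IsFiniteMeasure μ] (hπ : IsFinPartition μ π) {A : Set Ω}
    (hA : MeasurableSet A) {f : Ω → ℝ} (hf : Integrable f μ) :
    ∑ B ∈ π, ∫ x in B ∩ A, f x ∂μ = ∫ x in A, f x ∂μ := by
  have h1 : ∀ B ∈ π, MeasurableSet (B ∩ A) := fun B hB => (hπ.1 B hB).inter hA
  have h2 : Set.Pairwise (π : Set (Set Ω)) (Function.onFun Disjoint fun B => B ∩ A) := by
    intro B hB C hC hne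
    exact Disjoint.mono inter_subset_left inter_subset_left (hπ.2.2.1 hB hC hne)
  have h3 := integral_biUnion_finset (μ := μ) (f := f) π h1 h2 (fun B _ => hf.integrableOn)
  have hset : ⋃ B ∈ π, (B ∩ A) = A := by
    ext x
    simp only [mem_iUnion, mem_inter_iff, exists_prop]
    constructor
    · rintro ⟨B, hB, hxB, hxA⟩
      exact hxA
    · intro hxA
      obtain ⟨B, hB, hxB⟩ := hπ.exists_mem x
      exact ⟨B, hB, hxB, hxA⟩
  rw [← h3, hset]

lemma sum_setIntegral [IsFiniteMeasure μ] (hπ : IsFinPartition μ π) {f : Ω → ℝ}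
    (hf : Integrable f μ) : ∑ B ∈ π, ∫ x in B, f x ∂μ = ∫ x, f x ∂μ := by
  have h := sum_setIntegral_inter hπ MeasurableSet.univ hf
  simp only [Set.inter_univ, setIntegral_univ] at h
  exact h

lemma partCE_eq [IsProbabilityMeasure μ] (hπ : IsFinPartition μ π) {X : Ω → ℝ}
    (hX : Integrable X μ) : partCE μ X π =ᵐ[μ] pAvg μ X π := by
  have hm : MeasurableSpace.generateFrom (π : Set (Set Ω)) ≤ ‹MeasurableSpace Ω› :=
    MeasurableSpace.generateFrom_le (fun t ht => hπ.1 t (Finset.mem_coe.1 ht))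
  have percell : ∀ C ∈ π, ∫ x in C, pAvg μ X π x ∂μ = ∫ x in C, X x ∂μ := by
    intro C hC
    have hCμ : (μ C).toReal ≠ 0 :=
      (ENNReal.toReal_pos (hπ.2.1 C hC).ne' (measure_ne_top μ C)).ne'
    have : ∫ x in C, pAvg μ X π x ∂μ
        = ∑ B ∈ π, ∫ x in C, Set.indicator B (fun _ => (∫ y in B, X y ∂μ) / (μ B).toReal) x ∂μ := by
      exact integral_finset_sum π (fun B hB =>
        ((integrable_const _).indicator (hπ.1 B hB)).integrableOn)
    rw [this, Finset.sum_eq_single_of_mem C hC]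
    · rw [setIntegral_indicator (hπ.1 C hC), Set.inter_self, setIntegral_const, smul_eq_mul,
        measureReal_def, mul_comm, div_mul_cancel₀ _ hCμ]
    · intro B hB hne
      rw [setIntegral_indicator (hπ.1 B hB),
        Set.disjoint_iff_inter_eq_empty.1 (hπ.disj hC hB hne.symm)]
      simp
  refine (ae_eq_condExp_of_forall_setIntegral_eq hm hX
    (fun s _ _ => (pAvg_integrable hπ X).integrableOn) ?_ ?_).symm
  · intro s hs _
    obtain ⟨T, hTsub, rfl⟩ := measurableSet_partition hπ hs
    rw [sUnion_eq_biUnion, Finset.set_biUnion_coe,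
      integral_biUnion_finset T (fun B hB => hπ.1 B (hTsub hB))
        (fun B hB C hC hne => hπ.2.2.1 (Finset.coe_subset.2 hTsub hB)
          (Finset.coe_subset.2 hTsub hC) hne)
        (fun B _ => (pAvg_integrable hπ X).integrableOn),
      integral_biUnion_finset T (fun B hB => hπ.1 B (hTsub hB))
        (fun B hB C hC hne => hπ.2.2.1 (Finset.coe_subset.2 hTsub hB)
          (Finset.coe_subset.2 hTsub hC) hne)
        (fun B _ => hX.integrableOn)]
    exact Finset.sum_congr rfl (fun C hC => percell C (hTsub hC))
  · refine StronglyMeasurable.aestronglyMeasurable (Measurable.stronglyMeasurable ?_)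
    refine Finset.measurable_sum π (fun B hB => ?_)
    exact measurable_const.indicator
      (MeasurableSpace.measurableSet_generateFrom (Finset.mem_coe.2 hB))

end Partition



section Construct
variable {μ : Measure Ω} [IsProbabilityMeasure μ]

lemma exists_good_partition {X : Ω → ℝ} (hX : Measurable X) {δ : ℝ} (hδ : 0 < δ) (c : ℝ) :
    ∃ (π₀ : Finset (Set Ω)) (S : Ω → ℝ) (A : Set Ω) (K : ℝ),
      IsFinPartition μ π₀ ∧ Measurable S ∧ (∀ ω, |S ω| ≤ K) ∧
      (∀ C ∈ π₀, ∀ ω ∈ C, ∀ ω' ∈ C, S ω = S ω') ∧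
      MeasurableSet A ∧ A ⊆ {ω | c ≤ |X ω|} ∧
      (∀ᵐ ω ∂μ, |X ω - S ω| ≤ δ + |X ω| * A.indicator (fun _ => (1:ℝ)) ω) ∧
      (∀ C ∈ π₀, μ (C ∩ A) = 0 ∨ μ (C \ A) = 0) := by
  classical
  set N : ℕ := max 1 ⌈c / δ⌉₊ with hNdef
  have hNc : c ≤ (N : ℝ) * δ := by
    have h1 : c / δ ≤ (⌈c / δ⌉₊ : ℝ) := Nat.le_ceil _
    have h2 : ((⌈c / δ⌉₊ : ℕ) : ℝ) ≤ (N : ℝ) := by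
      exact_mod_cast Nat.le_max_right 1 ⌈c / δ⌉₊
    rw [div_le_iff₀ hδ] at h1
    nlinarith
  have hNpos : (0:ℝ) < (N : ℝ) * δ := by
    have : (1:ℝ) ≤ (N:ℝ) := by exact_mod_cast Nat.le_max_left 1 ⌈c / δ⌉₊
    nlinarith
  set f : Ω → ℤ := fun ω =>
    if -((N:ℝ) * δ) ≤ X ω ∧ X ω < (N:ℝ) * δ then ⌊X ω / δ⌋ else (N:ℤ) with hfdef
  have hfmeas : Measurable f := by
    refine Measurable.ite ?_ (hX.div_const δ).floor measurable_const
    exact (measurableSet_le measurable_const hX).inter (measurableSet_lt hX measurable_const)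
  have hfloor_lt : ∀ ω, X ω < (N:ℝ) * δ → ⌊X ω / δ⌋ < (N:ℤ) := by
    intro ω h
    have h2 : X ω / δ < (((N:ℤ)) : ℝ) := by
      rw [div_lt_iff₀ hδ]; push_cast; exact h
    exact Int.floor_lt.2 h2
  have hful : ∀ ω, f ω ∈ Finset.Icc (-(N:ℤ)) (N:ℤ) := by
    intro ω
    rw [Finset.mem_Icc]
    simp only [hfdef]
    by_cases h : -((N:ℝ) * δ) ≤ X ω ∧ X ω < (N:ℝ) * δ
    · rw [if_pos h]
      refine ⟨?_, le_of_lt (hfloor_lt ω h.2)⟩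
      rw [Int.le_floor]
      push_cast
      rw [le_div_iff₀ hδ]
      linarith [h.1]
    · rw [if_neg h]
      constructor
      · have : (0:ℤ) ≤ (N:ℤ) := Int.ofNat_nonneg N
        omega
      · exact le_refl _
  have hfN : ∀ ω, f ω = (N:ℤ) ↔ ¬(-((N:ℝ) * δ) ≤ X ω ∧ X ω < (N:ℝ) * δ) := by
    intro ω
    simp only [hfdef]
    by_cases h : -((N:ℝ) * δ) ≤ X ω ∧ X ω < (N:ℝ) * δ
    · rw [if_pos h]
      exact ⟨fun heq => absurd heq (ne_of_lt (hfloor_lt ω h.2)), fun hc => absurd h hc⟩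
    · rw [if_neg h]
      simp [h]
  have hex : ∃ k ∈ Finset.Icc (-(N:ℤ)) (N:ℤ), μ (f ⁻¹' {k}) ≠ 0 := by
    by_contra hcon
    push_neg at hcon
    have hcover : (univ : Set Ω) ⊆ ⋃ k ∈ Finset.Icc (-(N:ℤ)) (N:ℤ), f ⁻¹' {k} :=
      fun ω _ => mem_biUnion (hful ω) rfl
    have h1 : μ (univ : Set Ω) ≤ μ (⋃ k ∈ Finset.Icc (-(N:ℤ)) (N:ℤ), f ⁻¹' {k}) :=
      measure_mono hcover
    have h2 := measure_biUnion_finset_le (μ := μ) (Finset.Icc (-(N:ℤ)) (N:ℤ)) (fun k => f ⁻¹' {k})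
    rw [Finset.sum_eq_zero (fun k hk => hcon k hk)] at h2
    have h3 : μ (univ : Set Ω) = 0 := le_antisymm (le_trans h1 h2) zero_le
    rw [measure_univ] at h3
    exact one_ne_zero h3
  obtain ⟨k₀, hk₀Icc, hk₀⟩ := hex
  set g : Ω → ℤ := fun ω => if μ (f ⁻¹' {f ω}) = 0 then k₀ else f ω with hgdef
  have hgmeas : Measurable g := by
    have h : g = (fun k : ℤ => if μ (f ⁻¹' {k}) = 0 then k₀ else k) ∘ f := rfl
    rw [h]
    exact measurable_from_top.comp hfmeas
  have hgrange : ∀ ω, g ω ∈ Finset.Icc (-(N:ℤ)) (N:ℤ) := by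
    intro ω
    simp only [hgdef]
    by_cases h : μ (f ⁻¹' {f ω}) = 0
    · rw [if_pos h]; exact hk₀Icc
    · rw [if_neg h]; exact hful ω
  have hsubfg : ∀ k : ℤ, μ (f ⁻¹' {k}) ≠ 0 → f ⁻¹' {k} ⊆ g ⁻¹' {k} := by
    intro k hk ω' hω'
    simp only [mem_preimage, mem_singleton_iff] at hω' ⊢
    simp only [hgdef]
    rw [hω', if_neg hk]
  have hgfiber : ∀ ω, μ (g ⁻¹' {g ω}) ≠ 0 := by
    intro ω
    by_cases h : μ (f ⁻¹' {f ω}) = 0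
    · have hgω : g ω = k₀ := by rw [hgdef]; simp only; rw [if_pos h]
      rw [hgω]
      exact fun hzero => hk₀ (measure_mono_null (hsubfg k₀ hk₀) hzero)
    · have hgω : g ω = f ω := by rw [hgdef]; simp only; rw [if_neg h]
      rw [hgω]
      exact fun hzero => h (measure_mono_null (hsubfg _ h) hzero)
  set Z : Set Ω := {ω | μ (f ⁻¹' {f ω}) = 0} with hZdef
  have hZnull : μ Z = 0 := by
    have hZsub : Z ⊆ ⋃ k ∈ ((Finset.Icc (-(N:ℤ)) (N:ℤ)).filter (fun k => μ (f ⁻¹' {k}) = 0)),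
        f ⁻¹' {k} := by
      intro ω hω
      exact mem_biUnion (Finset.mem_filter.2 ⟨hful ω, hω⟩) rfl
    refine measure_mono_null hZsub ?_
    have h2 := measure_biUnion_finset_le (μ := μ)
      ((Finset.Icc (-(N:ℤ)) (N:ℤ)).filter (fun k => μ (f ⁻¹' {k}) = 0)) (fun k => f ⁻¹' {k})
    rw [Finset.sum_eq_zero (fun k hk => (Finset.mem_filter.1 hk).2)] at h2
    exact le_antisymm h2 zero_le
  have hgfZ : ∀ ω, ω ∉ Z → g ω = f ω := by
    intro ω hω
    have hωz : ¬ (μ (f ⁻¹' {f ω}) = 0) := hω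
    simp only [hgdef]
    rw [if_neg hωz]
  set π₀ : Finset (Set Ω) := ((Finset.Icc (-(N:ℤ)) (N:ℤ)).filter
    (fun k => μ (g ⁻¹' {k}) ≠ 0)).image (fun k => g ⁻¹' {k}) with hπ₀def
  have hπ₀mem : ∀ C ∈ π₀, ∃ k : ℤ, μ (g ⁻¹' {k}) ≠ 0 ∧ C = g ⁻¹' {k} := by
    intro C hC
    obtain ⟨k, hk, rfl⟩ := Finset.mem_image.1 hC
    exact ⟨k, (Finset.mem_filter.1 hk).2, rfl⟩
  set S : Ω → ℝ := fun ω => if g ω = (N:ℤ) then 0 else δ * (g ω : ℝ) with hSdef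
  set A : Set Ω := f ⁻¹' {(N:ℤ)} with hAdef
  have hπ₀ : IsFinPartition μ π₀ := by
    refine ⟨?_, ?_, ?_, ?_⟩
    · intro C hC
      obtain ⟨k, _, rfl⟩ := hπ₀mem C hC
      exact hgmeas (measurableSet_singleton k)
    · intro C hC
      obtain ⟨k, hk, rfl⟩ := hπ₀mem C hC
      exact pos_iff_ne_zero.2 hk
    · intro s hs t ht hst
      obtain ⟨k, _, rfl⟩ := hπ₀mem s (Finset.mem_coe.1 hs)
      obtain ⟨k', _, rfl⟩ := hπ₀mem t (Finset.mem_coe.1 ht)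
      refine Set.disjoint_left.2 (fun ω hω hω' => ?_)
      simp only [id, mem_preimage, mem_singleton_iff] at hω hω'
      have hkk : k = k' := hω.symm.trans hω'
      exact hst (by rw [hkk])
    · ext ω
      simp only [mem_sUnion, Finset.mem_coe, mem_univ, iff_true]
      refine ⟨g ⁻¹' {g ω}, ?_, rfl⟩
      exact Finset.mem_image.2 ⟨g ω, Finset.mem_filter.2 ⟨hgrange ω, hgfiber ω⟩, rfl⟩
  have hSmeas : Measurable S := by
    have h : S = (fun k : ℤ => if k = (N:ℤ) then 0 else δ * (k : ℝ)) ∘ g := rfl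
    rw [h]
    exact measurable_from_top.comp hgmeas
  have hSbound : ∀ ω, |S ω| ≤ δ * (N:ℝ) := by
    intro ω
    have hNnn : (0:ℝ) ≤ δ * (N:ℝ) := by positivity
    simp only [hSdef]
    by_cases h : g ω = (N:ℤ)
    · rw [if_pos h]; simpa using hNnn
    · rw [if_neg h]
      rw [abs_mul, abs_of_pos hδ]
      refine mul_le_mul_of_nonneg_left ?_ hδ.le
      have := Finset.mem_Icc.1 (hgrange ω)
      rw [abs_le]
      constructor <;> [exact_mod_cast this.1; exact_mod_cast this.2]
  have hSconst : ∀ C ∈ π₀, ∀ ω ∈ C, ∀ ω' ∈ C, S ω = S ω' := by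
    intro C hC ω hω ω' hω'
    obtain ⟨k, _, rfl⟩ := hπ₀mem C hC
    simp only [mem_preimage, mem_singleton_iff] at hω hω'
    simp only [hSdef]
    rw [hω, hω']
  have hAmeas : MeasurableSet A := hfmeas (measurableSet_singleton _)
  have hAsub : A ⊆ {ω | c ≤ |X ω|} := by
    intro ω hω
    have hfω : f ω = (N:ℤ) := hω
    have hcond := (hfN ω).1 hfω
    rw [not_and_or, not_le, not_lt] at hcond
    simp only [mem_setOf_eq]
    rcases hcond with h | h
    · rw [abs_of_neg (by nlinarith : X ω < 0)]
      nlinarith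
    · rw [abs_of_nonneg (by nlinarith : (0:ℝ) ≤ X ω)]
      linarith
  have hae : ∀ᵐ ω ∂μ, |X ω - S ω| ≤ δ + |X ω| * A.indicator (fun _ => (1:ℝ)) ω := by
    have hZc : ∀ᵐ ω ∂μ, ω ∉ Z := measure_eq_zero_iff_ae_notMem.1 hZnull
    filter_upwards [hZc] with ω hω
    have hgf := hgfZ ω hω
    by_cases hcase : f ω = (N:ℤ)
    · have hωA : ω ∈ A := hcase
      rw [indicator_of_mem hωA]
      have hSω : S ω = 0 := by simp only [hSdef]; rw [if_pos (hgf.trans hcase)]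
      rw [hSω, sub_zero, mul_one]
      linarith [abs_nonneg (X ω)]
    · have hωA : ω ∉ A := fun h => hcase h
      rw [indicator_of_notMem hωA, mul_zero, add_zero]
      have hcond : -((N:ℝ) * δ) ≤ X ω ∧ X ω < (N:ℝ) * δ := by
        by_contra hc
        exact hcase ((hfN ω).2 hc)
      have hfω : f ω = ⌊X ω / δ⌋ := by simp only [hfdef]; rw [if_pos hcond]
      have hgN : g ω ≠ (N:ℤ) := by rw [hgf]; exact hcase
      have hSω : S ω = δ * ((⌊X ω / δ⌋ : ℤ) : ℝ) := by
        simp only [hSdef]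
        rw [if_neg hgN, hgf, hfω]
      have h1 : (⌊X ω / δ⌋ : ℝ) ≤ X ω / δ := Int.floor_le _
      have h2 : X ω / δ < (⌊X ω / δ⌋ : ℝ) + 1 := Int.lt_floor_add_one _
      have hXd : δ * (X ω / δ) = X ω := by field_simp
      have h3 := mul_le_mul_of_nonneg_left h1 hδ.le
      have h4 := mul_lt_mul_of_pos_left h2 hδ
      rw [hSω, abs_le]
      constructor <;> nlinarith
  have hCA : ∀ C ∈ π₀, μ (C ∩ A) = 0 ∨ μ (C \ A) = 0 := by
    intro C hC
    obtain ⟨k, _, rfl⟩ := hπ₀mem C hC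
    by_cases hk : k = (N:ℤ)
    · right
      refine measure_mono_null (fun ω hω => ?_) hZnull
      obtain ⟨hω1, hω2⟩ := hω
      simp only [mem_preimage, mem_singleton_iff] at hω1
      by_contra hωZ
      have hfω : f ω = (N:ℤ) := by rw [← hgfZ ω hωZ, hω1, hk]
      exact hω2 hfω
    · left
      refine measure_mono_null (fun ω hω => ?_) hZnull
      obtain ⟨hω1, hω2⟩ := hω
      simp only [mem_preimage, mem_singleton_iff] at hω1
      have hω2' : f ω = (N:ℤ) := hω2
      by_contra hωZ
      exact hk (by rw [← hω1, hgfZ ω hωZ, hω2'])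
  exact ⟨π₀, S, A, δ * (N:ℝ), hπ₀, hSmeas, hSbound, hSconst, hAmeas, hAsub, hae, hCA⟩

end Construct



lemma tendsto_tail_integral {μ : Measure Ω} [IsProbabilityMeasure μ] {X : Ω → ℝ}
    (hX : Measurable X) {h : Ω → ℝ} (hh : Integrable h μ) (hh0 : ∀ ω, 0 ≤ h ω) :
    Tendsto (fun n : ℕ => ∫ ω in {ω' | (n:ℝ) ≤ |X ω'|}, h ω ∂μ) atTop (nhds 0) := by
  have hmeas : ∀ n : ℕ, MeasurableSet {ω' | (n:ℝ) ≤ |X ω'|} :=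
    fun n => measurableSet_le measurable_const hX.abs
  have heq : ∀ n : ℕ, ∫ ω in {ω' | (n:ℝ) ≤ |X ω'|}, h ω ∂μ
      = ∫ ω, Set.indicator {ω' | (n:ℝ) ≤ |X ω'|} h ω ∂μ :=
    fun n => (integral_indicator (hmeas n)).symm
  simp only [heq]
  have h0 : ∫ ω, (fun _ : Ω => (0:ℝ)) ω ∂μ = 0 := by simp
  rw [show (0:ℝ) = ∫ ω, (fun _ : Ω => (0:ℝ)) ω ∂μ from h0.symm]
  refine tendsto_integral_of_dominated_convergence h
    (fun n => hh.1.indicator (hmeas n)) hh ?_ ?_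
  · intro n
    refine ae_of_all μ (fun ω => ?_)
    by_cases hω : ω ∈ {ω' | (n:ℝ) ≤ |X ω'|}
    · rw [indicator_of_mem hω, Real.norm_eq_abs, abs_of_nonneg (hh0 ω)]
    · rw [indicator_of_notMem hω]
      simp [hh0 ω]
  · refine ae_of_all μ (fun ω => ?_)
    have hev : ∀ᶠ n : ℕ in atTop, Set.indicator {ω' | (n:ℝ) ≤ |X ω'|} h ω = 0 := by
      obtain ⟨n₀, hn₀⟩ := exists_nat_gt |X ω|
      refine eventually_atTop.2 ⟨n₀, fun n hn => indicator_of_notMem ?_ _⟩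
      simp only [mem_setOf_eq, not_le]
      calc |X ω| < n₀ := hn₀
      _ ≤ n := by exact_mod_cast hn
    exact Tendsto.congr' (hev.mono fun n hn => hn.symm) tendsto_const_nhds


/-- `E[|E[X|π] - X| ⬝ Y] → 0` along the net of finite measurable
partitions directed by refinement, for `X ∈ L^Φ` and `0 ≤ Y ∈ L^Ψ`. -/
theorem condexp_net_converges_weighted
    {Ω : Type*} [MeasurableSpace Ω] (μ : Measure Ω) [IsProbabilityMeasure μ]
    (Φ : ℝ → ℝ) (hΦ : IsOrliczFunction Φ) (hΦ' : StandingAssumptions Φ)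
    (X Y : Ω → ℝ) (hX : MemOrlicz Φ μ X)
    (hY : MemOrlicz (conjugate Φ) μ Y) (hYpos : ∀ ω, 0 ≤ Y ω) :
    ∀ ε : ℝ, 0 < ε → ∃ π₀ : Finset (Set Ω), IsFinPartition μ π₀ ∧
      ∀ π : Finset (Set Ω), IsFinPartition μ π → Refines π π₀ →
        ∫ ω, |partCE μ X π ω - X ω| * Y ω ∂μ < ε := by
  intro ε hε
  have hXmeas := hX.1
  have hYmeas := hY.1
  obtain ⟨l, hl, hmodX⟩ := exists_scale hX
  obtain ⟨m, hm, hmodY⟩ := exists_scale hY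
  have hΦmono := hΦ.2.1
  have hΦnn := hΦ.2.2.2
  obtain ⟨cΦ, hcΦ0, hcΦ⟩ := exists_linear_lb hΦ hΦ'
  obtain ⟨hΦXint, hXabsint⟩ := modular_pack hΦmono hΦnn hcΦ hXmeas.abs
    (fun ω => abs_nonneg _) hl hmodX
  have hXint : Integrable X μ :=
    Integrable.mono' hXabsint hXmeas.aestronglyMeasurable
      (ae_of_all μ fun ω => le_of_eq (Real.norm_eq_abs _))
  have hΨmono : MonotoneOn (conjugate Φ) (Set.Ici (0:ℝ)) :=
    (conj_monotone hΦ hΦ').monotoneOn _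
  have hΨnn : ∀ s, 0 ≤ s → 0 ≤ conjugate Φ s := fun s _ => conj_nonneg hΦ hΦ' s
  have hΨc : ∀ s, 0 ≤ s → s ≤ Φ 1 + conjugate Φ s := by
    intro s _
    have h1 := le_conj hΦ hΦ' zero_le_one s
    rw [one_mul] at h1
    linarith
  have hmodY' : ∫⁻ ω, ENNReal.ofReal (conjugate Φ (Y ω / m)) ∂μ ≤ 1 := by
    refine le_trans (le_of_eq ?_) hmodY
    rw [modular]
    congr 1
    funext ω
    rw [abs_of_nonneg (hYpos ω)]
  obtain ⟨hΨYint, hYint⟩ := modular_pack hΨmono hΨnn hΨc hYmeas hYpos hm hmodY'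
  set ΦX := fun ω => Φ (|X ω| / l) with hΦXdef
  set ΨY := fun ω => conjugate Φ (Y ω / m) with hΨYdef
  set hfun := fun ω => ΦX ω + ΨY ω with hhdef
  have hfunint : Integrable hfun μ := hΦXint.add hΨYint
  have hfun0 : ∀ ω, 0 ≤ hfun ω := fun ω =>
    add_nonneg (hΦnn _ (div_nonneg (abs_nonneg _) hl.le))
      (hΨnn _ (div_nonneg (hYpos ω) hm.le))
  have hYoung : ∀ a b : ℝ, 0 ≤ a → 0 ≤ b →
      a * b ≤ l * m * (Φ (a / l) + conjugate Φ (b / m)) := by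
    intro a b ha hb
    have h1 := young hΦ hΦ' (div_nonneg ha hl.le) (b / m)
    have h2 : a * b = (l * m) * ((a / l) * (b / m)) := by field_simp
    rw [h2]
    exact mul_le_mul_of_nonneg_left h1 (by positivity)
  have hXYbound : ∀ ω, |X ω| * Y ω ≤ l * m * hfun ω := fun ω =>
    hYoung _ _ (abs_nonneg _) (hYpos ω)
  have hXYint : Integrable (fun ω => |X ω| * Y ω) μ := by
    refine Integrable.mono' (hfunint.const_mul (l*m))
      ((hXmeas.abs.mul hYmeas).aestronglyMeasurable) (ae_of_all μ fun ω => ?_)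
    rw [Real.norm_eq_abs, abs_of_nonneg (mul_nonneg (abs_nonneg _) (hYpos ω))]
    exact hXYbound ω
  set IY := ∫ ω, Y ω ∂μ with hIYdef
  have hIY : 0 ≤ IY := integral_nonneg hYpos
  have htail := tendsto_tail_integral hXmeas hfunint hfun0
  set εA := ε / (8 * (l*m) + 8) with hεAdef
  have hεA : 0 < εA := by positivity
  obtain ⟨n, hn⟩ := (htail.eventually (gt_mem_nhds hεA)).exists
  set δ := ε / (8 * (IY + 1)) with hδdef
  have hδ : 0 < δ := by positivity
  obtain ⟨π₀, S, A, K, hπ₀, hSmeas, hSbound, hSconst, hAmeas, hAsub, haebound, hCA⟩ :=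
    exists_good_partition (μ := μ) hXmeas hδ (n : ℝ)
  have hAn : ∫ ω in A, hfun ω ∂μ ≤ ∫ ω in {ω' | (n:ℝ) ≤ |X ω'|}, hfun ω ∂μ :=
    setIntegral_mono_set hfunint.integrableOn (ae_restrict_of_ae (ae_of_all μ hfun0))
      (HasSubset.Subset.eventuallyLE hAsub)
  have hAfin : ∫ ω in A, hfun ω ∂μ < εA := lt_of_le_of_lt hAn hn
  have hA0 : 0 ≤ ∫ ω in A, hfun ω ∂μ := integral_nonneg hfun0
  refine ⟨π₀, hπ₀, ?_⟩
  intro π hπ href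
  set R := fun ω => X ω - S ω with hRdef
  have hSint : Integrable S μ := Integrable.mono' (integrable_const K)
    hSmeas.aestronglyMeasurable (ae_of_all μ hSbound)
  have hRint : Integrable R μ := hXint.sub hSint
  have hRmeas : Measurable R := hXmeas.sub hSmeas
  have hkey : (fun ω => |partCE μ X π ω - X ω| * Y ω)
      =ᵐ[μ] (fun ω => |pAvg μ X π ω - X ω| * Y ω) := by
    filter_upwards [partCE_eq hπ hXint] with ω hω
    rw [hω]
  rw [integral_congr_ae hkey]
  have hcellpos : ∀ B ∈ π, (0:ℝ) < (μ B).toReal := fun B hB =>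
    ENNReal.toReal_pos (hπ.2.1 B hB).ne' (measure_ne_top μ B)
  -- pointwise bound
  have hptw : ∀ ω, |pAvg μ X π ω - X ω| ≤ pAvg μ (fun x => |R x|) π ω + |R ω| := by
    intro ω
    obtain ⟨B, hB, hωB⟩ := hπ.exists_mem ω
    obtain ⟨C, hC, hBC⟩ := href B hB
    rw [pAvg_apply hπ X hB hωB, pAvg_apply hπ _ hB hωB]
    have hb := hcellpos B hB
    have hSB : ∫ x in B, S x ∂μ = S ω * (μ B).toReal := by
      rw [setIntegral_congr_fun (hπ.1 B hB)
        (show EqOn S (fun _ => S ω) B from fun x hx => hSconst C hC x (hBC hx) ω (hBC hωB)),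
        setIntegral_const, smul_eq_mul, measureReal_def, mul_comm]
    have hXB : ∫ x in B, X x ∂μ = (∫ x in B, R x ∂μ) + S ω * (μ B).toReal := by
      calc ∫ x in B, X x ∂μ = ∫ x in B, (R x + S x) ∂μ := by
            congr 1
            funext x
            simp [hRdef]
      _ = (∫ x in B, R x ∂μ) + ∫ x in B, S x ∂μ :=
            integral_add hRint.integrableOn hSint.integrableOn
      _ = _ := by rw [hSB]
    rw [hXB]
    have h5 : ((∫ x in B, R x ∂μ) + S ω * (μ B).toReal) / (μ B).toReal - X ω
        = (∫ x in B, R x ∂μ) / (μ B).toReal - R ω := by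
      simp only [hRdef]
      field_simp
      ring
    rw [h5]
    have h6 : |(∫ x in B, R x ∂μ) / (μ B).toReal - R ω|
        ≤ |(∫ x in B, R x ∂μ) / (μ B).toReal| + |R ω| := abs_sub _ _
    have h7 : |(∫ x in B, R x ∂μ) / (μ B).toReal| ≤ (∫ x in B, |R x| ∂μ) / (μ B).toReal := by
      rw [abs_div, abs_of_pos hb]
      refine div_le_div_of_nonneg_right ?_ hb.le
      have h8 := norm_integral_le_integral_norm (μ := μ.restrict B) R
      simpa [Real.norm_eq_abs] using h8
    linarith
  have hptwY : ∀ ω, |pAvg μ X π ω - X ω| * Y ω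
      ≤ (pAvg μ (fun x => |R x|) π ω + |R ω|) * Y ω :=
    fun ω => mul_le_mul_of_nonneg_right (hptw ω) (hYpos ω)
  have hpavgY : ∀ ff : Ω → ℝ, Integrable (fun ω => pAvg μ ff π ω * Y ω) μ := by
    intro ff
    refine Integrable.mono' (hYint.const_mul (∑ B ∈ π, |(∫ x in B, ff x ∂μ) / (μ B).toReal|))
      (((pAvg_measurable hπ ff).mul hYmeas).aestronglyMeasurable) (ae_of_all μ fun ω => ?_)
    rw [Real.norm_eq_abs, abs_mul, abs_of_nonneg (hYpos ω)]
    exact mul_le_mul_of_nonneg_right (pAvg_bound hπ ff ω) (hYpos ω)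
  have hXYint' : Integrable (fun ω => X ω * Y ω) μ := by
    refine Integrable.mono' hXYint ((hXmeas.mul hYmeas).aestronglyMeasurable)
      (ae_of_all μ fun ω => ?_)
    rw [Real.norm_eq_abs, abs_mul, abs_of_nonneg (hYpos ω)]
  have hLHSint : Integrable (fun ω => |pAvg μ X π ω - X ω| * Y ω) μ := by
    have h1 : Integrable (fun ω => (pAvg μ X π ω - X ω) * Y ω) μ := by
      have heq : (fun ω => (pAvg μ X π ω - X ω) * Y ω)
          = fun ω => pAvg μ X π ω * Y ω - X ω * Y ω := by funext ω; ring
      rw [heq]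
      exact (hpavgY X).sub hXYint'
    have heq2 : (fun ω => |pAvg μ X π ω - X ω| * Y ω)
        = fun ω => |(pAvg μ X π ω - X ω) * Y ω| := by
      funext ω; rw [abs_mul, abs_of_nonneg (hYpos ω)]
    rw [heq2]
    exact h1.abs
  have hRabsY : Integrable (fun ω => |R ω| * Y ω) μ := by
    refine Integrable.mono' (hXYint.add (hYint.const_mul K))
      ((hRmeas.abs.mul hYmeas).aestronglyMeasurable) (ae_of_all μ fun ω => ?_)
    rw [Real.norm_eq_abs, abs_of_nonneg (mul_nonneg (abs_nonneg _) (hYpos ω))]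
    have hRb : |R ω| ≤ |X ω| + K := by
      simp only [hRdef]
      calc |X ω - S ω| ≤ |X ω| + |S ω| := abs_sub _ _
      _ ≤ |X ω| + K := by linarith [hSbound ω]
    calc |R ω| * Y ω ≤ (|X ω| + K) * Y ω := mul_le_mul_of_nonneg_right hRb (hYpos ω)
    _ = |X ω| * Y ω + K * Y ω := by ring
  have hRHSint : Integrable (fun ω => (pAvg μ (fun x => |R x|) π ω + |R ω|) * Y ω) μ := by
    have heq : (fun ω => (pAvg μ (fun x => |R x|) π ω + |R ω|) * Y ω)
        = fun ω => pAvg μ (fun x => |R x|) π ω * Y ω + |R ω| * Y ω := by funext ω; ring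
    rw [heq]
    exact (hpavgY _).add hRabsY
  have hstep1 : ∫ ω, |pAvg μ X π ω - X ω| * Y ω ∂μ
      ≤ ∫ ω, (pAvg μ (fun x => |R x|) π ω + |R ω|) * Y ω ∂μ :=
    integral_mono hLHSint hRHSint hptwY
  have hsplit : ∫ ω, (pAvg μ (fun x => |R x|) π ω + |R ω|) * Y ω ∂μ
      = (∫ ω, pAvg μ (fun x => |R x|) π ω * Y ω ∂μ) + ∫ ω, |R ω| * Y ω ∂μ := by
    have heq : (fun ω => (pAvg μ (fun x => |R x|) π ω + |R ω|) * Y ω)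
        = fun ω => pAvg μ (fun x => |R x|) π ω * Y ω + |R ω| * Y ω := by funext ω; ring
    rw [heq]
    exact integral_add (hpavgY _) hRabsY
  have hT1 : ∫ ω, pAvg μ (fun x => |R x|) π ω * Y ω ∂μ
      = ∑ B ∈ π, ((∫ x in B, |R x| ∂μ) / (μ B).toReal) * ∫ x in B, Y x ∂μ := by
    have heq : (fun ω => pAvg μ (fun x => |R x|) π ω * Y ω)
        = fun ω => ∑ B ∈ π, Set.indicator B
            (fun x => ((∫ x' in B, |R x'| ∂μ) / (μ B).toReal) * Y x) ω := by
      funext ω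
      rw [pAvg, Finset.sum_mul]
      refine Finset.sum_congr rfl (fun B hB => ?_)
      by_cases h : ω ∈ B
      · rw [indicator_of_mem h, indicator_of_mem h]
      · rw [indicator_of_notMem h, indicator_of_notMem h, zero_mul]
    rw [heq, integral_finset_sum π (fun B hB => ((hYint.const_mul _).indicator (hπ.1 B hB)))]
    refine Finset.sum_congr rfl (fun B hB => ?_)
    rw [integral_indicator (hπ.1 B hB), integral_const_mul]
  have hcell : ∀ B ∈ π, ((∫ x in B, |R x| ∂μ) / (μ B).toReal) * ∫ x in B, Y x ∂μ
      ≤ δ * ∫ x in B, Y x ∂μ + l * m * ∫ x in B ∩ A, hfun x ∂μ := by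
    intro B hB
    have hb := hcellpos B hB
    have hBmeas := hπ.1 B hB
    have hIYB : 0 ≤ ∫ x in B, Y x ∂μ := setIntegral_nonneg hBmeas (fun x _ => hYpos x)
    have hindeq : (fun x => |X x| * A.indicator (fun _ => (1:ℝ)) x)
        = A.indicator (fun x => |X x|) := by
      funext x
      by_cases h : x ∈ A
      · rw [indicator_of_mem h, indicator_of_mem h, mul_one]
      · rw [indicator_of_notMem h, indicator_of_notMem h, mul_zero]
    have hconstB : IntegrableOn (fun _ : Ω => δ) B μ :=
      integrableOn_const (measure_ne_top μ B) enorm_ne_top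
    have hIRB : ∫ x in B, |R x| ∂μ ≤ δ * (μ B).toReal + ∫ x in B ∩ A, |X x| ∂μ := by
      have h1 : ∫ x in B, |R x| ∂μ
          ≤ ∫ x in B, (δ + A.indicator (fun x => |X x|) x) ∂μ := by
        refine integral_mono_ae hRint.abs.integrableOn
          (hconstB.add ((hXabsint.indicator hAmeas).integrableOn)) ?_
        refine ae_restrict_of_ae ?_
        filter_upwards [haebound] with ω hω
        calc |R ω| = |X ω - S ω| := by simp [hRdef]
        _ ≤ δ + |X ω| * A.indicator (fun _ => (1:ℝ)) ω := hω
        _ = δ + A.indicator (fun x => |X x|) ω := by rw [← hindeq]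
      rw [integral_add hconstB ((hXabsint.indicator hAmeas).integrableOn),
        setIntegral_const, smul_eq_mul, measureReal_def, setIntegral_indicator hAmeas] at h1
      linarith [h1, mul_comm ((μ B).toReal) δ]
    have key2 : (∫ x in B ∩ A, |X x| ∂μ) * ((∫ x in B, Y x ∂μ) / (μ B).toReal)
        ≤ l * m * ∫ x in B ∩ A, hfun x ∂μ := by
      obtain ⟨C, hC, hBC⟩ := href B hB
      rcases hCA C hC with h0 | h0
      · have hBA0 : μ (B ∩ A) = 0 :=
          measure_mono_null (Set.inter_subset_inter_left A hBC) h0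
        rw [Measure.restrict_eq_zero.2 hBA0]
        simp
      · have hBA0 : μ (B \ A) = 0 :=
          measure_mono_null (Set.diff_subset_diff_left hBC) h0
        set a := (∫ x in B, Y x ∂μ) / (μ B).toReal with hadef
        have ha0 : 0 ≤ a := div_nonneg hIYB hb.le
        have hBAfin : μ (B ∩ A) < ∞ :=
          lt_of_le_of_lt (measure_mono inter_subset_left) (measure_lt_top μ B)
        have hconstBA : IntegrableOn (fun _ : Ω => conjugate Φ (a / m)) (B ∩ A) μ :=
          integrableOn_const hBAfin.ne enorm_ne_top
        have step1 : (∫ x in B ∩ A, |X x| ∂μ) * a = ∫ x in B ∩ A, (|X x| * a) ∂μ :=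
          (integral_mul_const a _).symm
        have step2 : ∫ x in B ∩ A, (|X x| * a) ∂μ
            ≤ ∫ x in B ∩ A, (l * m * (ΦX x + conjugate Φ (a / m))) ∂μ :=
          integral_mono (hXabsint.integrableOn.mul_const a)
            (((hΦXint.integrableOn).add hconstBA).const_mul _)
            (fun x => hYoung _ _ (abs_nonneg _) ha0)
        have step3 : ∫ x in B ∩ A, (l * m * (ΦX x + conjugate Φ (a / m))) ∂μ
            = l * m * ((∫ x in B ∩ A, ΦX x ∂μ)
              + conjugate Φ (a / m) * (μ (B ∩ A)).toReal) := by
          rw [integral_const_mul, integral_add (hΦXint.integrableOn) hconstBA,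
            setIntegral_const, smul_eq_mul, measureReal_def, mul_comm ((μ (B ∩ A)).toReal) _]
        have hstep4 : conjugate Φ (a / m) ≤ (∫ x in B, ΨY x ∂μ) / (μ B).toReal := by
          have haam : a / m = (∫ x in B, (Y x / m) ∂μ) / (μ B).toReal := by
            rw [integral_div, hadef]
            ring
          rw [haam]
          exact conj_avg_le hΦ hΦ' (hπ.2.1 B hB).ne' (hYint.integrableOn.div_const m)
            (hΨYint.integrableOn)
        have hstep5 : (μ (B ∩ A)).toReal = (μ B).toReal := by
          have hm5 := measure_inter_add_diff (μ := μ) B hAmeas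
          rw [hBA0, add_zero] at hm5
          rw [hm5]
        have hstep6 : ∫ x in B, ΨY x ∂μ = ∫ x in B ∩ A, ΨY x ∂μ := by
          have h7 := integral_inter_add_diff (μ := μ) (f := ΨY) (s := B) hAmeas
            hΨYint.integrableOn
          have h8 : ∫ x in B \ A, ΨY x ∂μ = 0 := by
            rw [Measure.restrict_eq_zero.2 hBA0, integral_zero_measure]
          linarith [h7, h8]
        have hstep7 : conjugate Φ (a / m) * (μ (B ∩ A)).toReal ≤ ∫ x in B ∩ A, ΨY x ∂μ := by
          rw [hstep5]
          calc conjugate Φ (a / m) * (μ B).toReal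
              ≤ ((∫ x in B, ΨY x ∂μ) / (μ B).toReal) * (μ B).toReal :=
                mul_le_mul_of_nonneg_right hstep4 hb.le
          _ = ∫ x in B, ΨY x ∂μ := div_mul_cancel₀ _ hb.ne'
          _ = ∫ x in B ∩ A, ΨY x ∂μ := hstep6
        have hfin : ∫ x in B ∩ A, hfun x ∂μ
            = (∫ x in B ∩ A, ΦX x ∂μ) + ∫ x in B ∩ A, ΨY x ∂μ :=
          integral_add hΦXint.integrableOn hΨYint.integrableOn
        have hlm0 : (0:ℝ) ≤ l * m := by positivity
        calc (∫ x in B ∩ A, |X x| ∂μ) * a = ∫ x in B ∩ A, (|X x| * a) ∂μ := step1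
        _ ≤ ∫ x in B ∩ A, (l * m * (ΦX x + conjugate Φ (a / m))) ∂μ := step2
        _ = l * m * ((∫ x in B ∩ A, ΦX x ∂μ) + conjugate Φ (a / m) * (μ (B ∩ A)).toReal) :=
              step3
        _ ≤ l * m * ((∫ x in B ∩ A, ΦX x ∂μ) + ∫ x in B ∩ A, ΨY x ∂μ) :=
              mul_le_mul_of_nonneg_left (add_le_add le_rfl hstep7) hlm0
        _ = l * m * ∫ x in B ∩ A, hfun x ∂μ := by rw [hfin]
    have hIA0 : 0 ≤ ∫ x in B ∩ A, |X x| ∂μ :=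
      setIntegral_nonneg (hBmeas.inter hAmeas) (fun x _ => abs_nonneg _)
    calc ((∫ x in B, |R x| ∂μ) / (μ B).toReal) * ∫ x in B, Y x ∂μ
        ≤ ((δ * (μ B).toReal + ∫ x in B ∩ A, |X x| ∂μ) / (μ B).toReal) * ∫ x in B, Y x ∂μ :=
          mul_le_mul_of_nonneg_right (div_le_div_of_nonneg_right hIRB hb.le) hIYB
    _ = δ * ∫ x in B, Y x ∂μ
        + (∫ x in B ∩ A, |X x| ∂μ) * ((∫ x in B, Y x ∂μ) / (μ B).toReal) := by
          field_simp
    _ ≤ δ * ∫ x in B, Y x ∂μ + l * m * ∫ x in B ∩ A, hfun x ∂μ := add_le_add le_rfl key2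
  have hsum : ∑ B ∈ π, ((∫ x in B, |R x| ∂μ) / (μ B).toReal) * ∫ x in B, Y x ∂μ
      ≤ δ * IY + l * m * ∫ ω in A, hfun ω ∂μ := by
    calc ∑ B ∈ π, ((∫ x in B, |R x| ∂μ) / (μ B).toReal) * ∫ x in B, Y x ∂μ
        ≤ ∑ B ∈ π, (δ * ∫ x in B, Y x ∂μ + l * m * ∫ x in B ∩ A, hfun x ∂μ) :=
          Finset.sum_le_sum hcell
    _ = δ * ∑ B ∈ π, ∫ x in B, Y x ∂μ + l * m * ∑ B ∈ π, ∫ x in B ∩ A, hfun x ∂μ := by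
          rw [Finset.sum_add_distrib, Finset.mul_sum, Finset.mul_sum]
    _ = δ * IY + l * m * ∫ ω in A, hfun ω ∂μ := by
          rw [sum_setIntegral hπ hYint, sum_setIntegral_inter hπ hAmeas hfunint]
  have hT2 : ∫ ω, |R ω| * Y ω ∂μ ≤ δ * IY + l * m * ∫ ω in A, hfun ω ∂μ := by
    have h1 : ∫ ω, |R ω| * Y ω ∂μ
        ≤ ∫ ω, (δ * Y ω + A.indicator (fun x => |X x| * Y x) ω) ∂μ := by
      refine integral_mono_ae hRabsY ((hYint.const_mul δ).add (hXYint.indicator hAmeas)) ?_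
      filter_upwards [haebound] with ω hω
      calc |R ω| * Y ω = |X ω - S ω| * Y ω := by simp [hRdef]
      _ ≤ (δ + |X ω| * A.indicator (fun _ => (1:ℝ)) ω) * Y ω :=
            mul_le_mul_of_nonneg_right hω (hYpos ω)
      _ = δ * Y ω + A.indicator (fun x => |X x| * Y x) ω := by
            by_cases h : ω ∈ A
            · rw [indicator_of_mem h, indicator_of_mem h]
              ring
            · rw [indicator_of_notMem h, indicator_of_notMem h]
              ring
    have h2 : ∫ ω, (δ * Y ω + A.indicator (fun x => |X x| * Y x) ω) ∂μ
        = δ * IY + ∫ ω in A, (|X ω| * Y ω) ∂μ := by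
      rw [integral_add (hYint.const_mul δ) (hXYint.indicator hAmeas), integral_const_mul,
        integral_indicator hAmeas]
    have h3 : ∫ ω in A, (|X ω| * Y ω) ∂μ ≤ l * m * ∫ ω in A, hfun ω ∂μ := by
      rw [← integral_const_mul]
      exact integral_mono hXYint.integrableOn ((hfunint.const_mul (l*m)).integrableOn) hXYbound
    linarith
  have hfinal : ∫ ω, |pAvg μ X π ω - X ω| * Y ω ∂μ
      ≤ 2 * (δ * IY) + 2 * (l * m * ∫ ω in A, hfun ω ∂μ) := by
    calc ∫ ω, |pAvg μ X π ω - X ω| * Y ω ∂μ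
        ≤ ∫ ω, (pAvg μ (fun x => |R x|) π ω + |R ω|) * Y ω ∂μ := hstep1
    _ = (∫ ω, pAvg μ (fun x => |R x|) π ω * Y ω ∂μ) + ∫ ω, |R ω| * Y ω ∂μ := hsplit
    _ = (∑ B ∈ π, ((∫ x in B, |R x| ∂μ) / (μ B).toReal) * ∫ x in B, Y x ∂μ)
        + ∫ ω, |R ω| * Y ω ∂μ := by rw [hT1]
    _ ≤ (δ * IY + l * m * ∫ ω in A, hfun ω ∂μ)
        + (δ * IY + l * m * ∫ ω in A, hfun ω ∂μ) := add_le_add hsum hT2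
    _ = 2 * (δ * IY) + 2 * (l * m * ∫ ω in A, hfun ω ∂μ) := by ring
  have hlm : 0 < l * m := by positivity
  have e1 : δ * IY ≤ ε / 8 := by
    rw [hδdef, div_mul_eq_mul_div, div_le_div_iff₀ (by positivity) (by norm_num : (0:ℝ) < 8)]
    nlinarith
  have e2 : l * m * ∫ ω in A, hfun ω ∂μ < ε / 4 := by
    have h4 : l * m * ∫ ω in A, hfun ω ∂μ < l * m * εA := mul_lt_mul_of_pos_left hAfin hlm
    have h5 : l * m * εA ≤ ε / 4 := by
      have hpos : (0:ℝ) < 8 * (l*m) + 8 := by positivity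
      rw [hεAdef, ← mul_div_assoc, div_le_div_iff₀ hpos (by norm_num : (0:ℝ) < 4)]
      nlinarith [mul_pos hlm hε]
    linarith
  linarith



end OrliczPaper
end
end

section
/- Let (Ω, F, ℙ) be a nonatomic probability space and Φ an Orlicz function. If X ∈ L^Φ is essentially bounded, then the net (E[X|π])_{π ∈ Π} of conditional expectations over finite measurable partitions converges to X uniformly, i.e. ‖E[X|π] − X‖_∞ → 0 along the directed set of partitions ordered by refinement. -/
open MeasureTheory ENNReal Filter Set

noncomputable section

namespace OrliczPaper

variable {Ω : Type*} [MeasurableSpace Ω]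

section CondexpHelpers

variable {Ω' : Type*} [MeasurableSpace Ω'] {μ : Measure Ω'}

/-- The average of an integrable function over a set of positive finite measure lies in any
closed interval essentially containing its values on that set. -/
lemma avg_mem_Icc [IsFiniteMeasure μ] {X : Ω' → ℝ} (hXi : Integrable X μ)
    {A : Set Ω'} (hA : MeasurableSet A) (hApos : 0 < μ A) {a b : ℝ}
    (hab : ∀ᵐ ω ∂μ, ω ∈ A → X ω ∈ Set.Icc a b) :
    (∫ x in A, X x ∂μ) / (μ A).toReal ∈ Set.Icc a b := by
  have hAfin : μ A ≠ ∞ := measure_ne_top μ A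
  have htR : 0 < (μ A).toReal := ENNReal.toReal_pos hApos.ne' hAfin
  have h1 : ∀ᵐ ω ∂(μ.restrict A), X ω ∈ Set.Icc a b := (ae_restrict_iff' hA).2 hab
  have hXiA : Integrable X (μ.restrict A) := hXi.restrict
  have hμA : ((μ.restrict A) Set.univ).toReal = (μ A).toReal := by
    simp [Measure.restrict_apply_univ]
  constructor
  · have hle : ∫ _ : Ω', a ∂(μ.restrict A) ≤ ∫ x in A, X x ∂μ :=
      integral_mono_ae (integrable_const a) hXiA (h1.mono fun ω h => h.1)
    rw [integral_const, measureReal_restrict_apply_univ, measureReal_def, smul_eq_mul] at hle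
    rw [le_div_iff₀ htR]
    linarith
  · have hle : ∫ x in A, X x ∂μ ≤ ∫ _ : Ω', b ∂(μ.restrict A) :=
      integral_mono_ae hXiA (integrable_const b) (h1.mono fun ω h => h.2)
    rw [integral_const, measureReal_restrict_apply_univ, measureReal_def, smul_eq_mul] at hle
    rw [div_le_iff₀ htR]
    linarith

/-- Conditional expectation with respect to a finite measurable partition is a.e. equal to the
simple function taking the average value on each cell. -/
lemma partCE_ae_eq [IsFiniteMeasure μ] {X : Ω' → ℝ} (hXi : Integrable X μ)
    {π : Finset (Set Ω')} (hπ : IsFinPartition μ π) :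
    partCE μ X π =ᵐ[μ]
      fun ω => ∑ A ∈ π, Set.indicator A
        (fun _ => (∫ x in A, X x ∂μ) / (μ A).toReal) ω := by
  obtain ⟨hmeas, hpos, hdisj, hcov⟩ := hπ
  have hm : MeasurableSpace.generateFrom ((π : Set (Set Ω'))) ≤ ‹MeasurableSpace Ω'› :=
    MeasurableSpace.generateFrom_le fun t ht => hmeas t ht
  haveI : SigmaFinite (μ.trim hm) := inferInstance
  set avg : Set Ω' → ℝ := fun A => (∫ x in A, X x ∂μ) / (μ A).toReal with havg
  set g : Ω' → ℝ := fun ω => ∑ A ∈ π, Set.indicator A (fun _ => avg A) ω with hg_def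
  have hg_int : Integrable g μ := by
    apply integrable_finset_sum
    intro A hA
    exact (integrable_const (avg A)).indicator (hmeas A hA)
  have hg_basic : ∀ A ∈ π, ∫ x in A, g x ∂μ = ∫ x in A, X x ∂μ := by
    intro A hA
    have h1 : ∫ x in A, g x ∂μ
        = ∑ B ∈ π, ∫ x in A, Set.indicator B (fun _ => avg B) x ∂μ := by
      apply integral_finset_sum
      intro B hB
      exact ((integrable_const (avg B)).indicator (hmeas B hB)).restrict
    rw [h1, Finset.sum_eq_single_of_mem A hA]
    · rw [setIntegral_indicator (hmeas A hA), Set.inter_self, setIntegral_const, smul_eq_mul,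
        measureReal_def, havg]
      have htR : (μ A).toReal ≠ 0 :=
        (ENNReal.toReal_pos (hpos A hA).ne' (measure_ne_top μ A)).ne'
      field_simp
    · intro B hB hBA
      rw [setIntegral_indicator (hmeas B hB)]
      have hdAB : A ∩ B = ∅ :=
        Set.disjoint_iff_inter_eq_empty.1 (hdisj hA hB (Ne.symm hBA))
      rw [hdAB]
      simp
  have hg_univ : ∫ x, g x ∂μ = ∫ x, X x ∂μ := by
    have huniv : (Set.univ : Set Ω') = ⋃ A ∈ π, A := by
      rw [← hcov]
      ext x
      simp [Set.mem_sUnion]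
    have hgU : ∫ x, g x ∂μ = ∑ A ∈ π, ∫ x in A, g x ∂μ := by
      rw [← setIntegral_univ (f := g), huniv]
      exact integral_biUnion_finset π (fun A hA => hmeas A hA) hdisj
        (fun A hA => hg_int.integrableOn)
    have hXU : ∫ x, X x ∂μ = ∑ A ∈ π, ∫ x in A, X x ∂μ := by
      rw [← setIntegral_univ (f := X), huniv]
      exact integral_biUnion_finset π (fun A hA => hmeas A hA) hdisj
        (fun A hA => hXi.integrableOn)
    rw [hgU, hXU]
    exact Finset.sum_congr rfl hg_basic
  have hpi : IsPiSystem ((π : Set (Set Ω'))) := by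
    intro s hs t ht hst
    by_cases h : s = t
    · subst h; rwa [Set.inter_self]
    · exact absurd (Set.disjoint_iff_inter_eq_empty.1 (hdisj hs ht h))
        (Set.nonempty_iff_ne_empty.1 hst)
  have hg_eq : ∀ s : Set Ω', MeasurableSet[MeasurableSpace.generateFrom ((π : Set (Set Ω')))] s →
      ∫ x in s, g x ∂μ = ∫ x in s, X x ∂μ := by
    have := @MeasurableSpace.induction_on_inter Ω'
      (MeasurableSpace.generateFrom ((π : Set (Set Ω'))))
      (fun s _ => ∫ x in s, g x ∂μ = ∫ x in s, X x ∂μ) ((π : Set (Set Ω'))) rfl hpi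
    apply this
    · simp
    · intro t ht
      exact hg_basic t ht
    · intro t htm hC
      have htM : MeasurableSet t := hm t htm
      have h1 := integral_add_compl htM hg_int
      have h2 := integral_add_compl htM hXi
      rw [hg_univ] at h1
      rw [← h2] at h1
      linarith
    · intro f hfd hfm hfC
      have hfM : ∀ i, MeasurableSet (f i) := fun i => hm _ (hfm i)
      rw [integral_iUnion hfM hfd hg_int.integrableOn,
        integral_iUnion hfM hfd hXi.integrableOn]
      exact tsum_congr hfC
  have hgm : AEStronglyMeasurable[MeasurableSpace.generateFrom ((π : Set (Set Ω')))] g μ := by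
    have hsm : StronglyMeasurable[MeasurableSpace.generateFrom ((π : Set (Set Ω')))] g := by
      have : Measurable[MeasurableSpace.generateFrom ((π : Set (Set Ω')))] g := by
        apply Finset.measurable_sum
        intro A hA
        exact Measurable.indicator measurable_const
          (MeasurableSpace.measurableSet_generateFrom hA)
      exact this.stronglyMeasurable
    exact hsm.aestronglyMeasurable
  exact (ae_eq_condExp_of_forall_setIntegral_eq hm hXi
    (fun s _ _ => hg_int.integrableOn) (fun s hs _ => hg_eq s hs) hgm).symm

/-- If on each cell of a finite partition `X` is essentially contained in a closed interval of
length at most `ε`, then `‖E[X|π] - X‖_∞ ≤ ε`. -/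
lemma key_bound [IsProbabilityMeasure μ] {X : Ω' → ℝ} (hXi : Integrable X μ)
    {π : Finset (Set Ω')} (hπ : IsFinPartition μ π) {ε : ℝ}
    (h : ∀ A ∈ π, ∃ a b : ℝ, b - a ≤ ε ∧ ∀ᵐ ω ∂μ, ω ∈ A → X ω ∈ Set.Icc a b) :
    eLpNorm (fun ω => partCE μ X π ω - X ω) ⊤ μ ≤ ENNReal.ofReal ε := by
  have hsel : ∀ A : Set Ω', ∃ a b : ℝ,
      A ∈ π → (b - a ≤ ε ∧ ∀ᵐ ω ∂μ, ω ∈ A → X ω ∈ Set.Icc a b) := by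
    intro A
    by_cases hA : A ∈ π
    · obtain ⟨a, b, hab⟩ := h A hA
      exact ⟨a, b, fun _ => hab⟩
    · exact ⟨0, 0, fun h' => absurd h' hA⟩
  choose aF bF hF using hsel
  have hgae := partCE_ae_eq hXi hπ
  have haeIcc : ∀ᵐ ω ∂μ, ∀ A ∈ (π : Set (Set Ω')), ω ∈ A → X ω ∈ Set.Icc (aF A) (bF A) := by
    rw [ae_ball_iff (π.countable_toSet)]
    intro A hA
    exact (hF A hA).2
  rw [eLpNorm_exponent_top]
  apply eLpNormEssSup_le_of_ae_bound (C := ε)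
  filter_upwards [hgae, haeIcc] with ω hg hIcc
  obtain ⟨A, hA, hωA⟩ : ∃ A ∈ (π : Set (Set Ω')), ω ∈ A := by
    have : ω ∈ ⋃₀ (π : Set (Set Ω')) := by rw [hπ.2.2.2]; trivial
    exact this
  have hgω : partCE μ X π ω = (∫ x in A, X x ∂μ) / (μ A).toReal := by
    rw [hg]
    rw [Finset.sum_eq_single_of_mem A hA]
    · exact Set.indicator_of_mem hωA _
    · intro B hB hBA
      apply Set.indicator_of_notMem
      exact fun hωB => (Set.disjoint_left.1 (hπ.2.2.1 hB hA hBA)) hωB hωA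
  have havgIcc : (∫ x in A, X x ∂μ) / (μ A).toReal ∈ Set.Icc (aF A) (bF A) :=
    avg_mem_Icc hXi (hπ.1 A hA) (hπ.2.1 A hA) (hF A hA).2
  have hXIcc : X ω ∈ Set.Icc (aF A) (bF A) := hIcc A hA hωA
  have hlen : bF A - aF A ≤ ε := (hF A hA).1
  rw [Real.norm_eq_abs, hgω, abs_sub_le_iff]
  obtain ⟨h1, h2⟩ := havgIcc
  obtain ⟨h3, h4⟩ := hXIcc
  constructor <;> linarith

end CondexpHelpers

/-- for essentially bounded `X ∈ L^Φ`, the net of conditional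
expectations over finite measurable partitions converges to `X` uniformly. -/
theorem condexp_net_converges_uniformly_of_bounded
    {Ω : Type*} [MeasurableSpace Ω] (μ : Measure Ω) [IsProbabilityMeasure μ]
    (hna : Nonatomic μ)
    (Φ : ℝ → ℝ) (hΦ : IsOrliczFunction Φ) (hΦ' : StandingAssumptions Φ)
    (X : Ω → ℝ) (hX : MemOrlicz Φ μ X) (hXb : ∃ c : ℝ, ∀ᵐ ω ∂μ, |X ω| ≤ c) :
    ∀ ε : ℝ, 0 < ε → ∃ π₀ : Finset (Set Ω), IsFinPartition μ π₀ ∧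
      ∀ π : Finset (Set Ω), IsFinPartition μ π → Refines π π₀ →
        eLpNorm (fun ω => partCE μ X π ω - X ω) ⊤ μ ≤ ENNReal.ofReal ε := by
  classical
  intro ε hε
  obtain ⟨hXmeas, _⟩ := hX
  obtain ⟨c, hc⟩ := hXb
  set c' := |c| with hc'_def
  have hc' : ∀ᵐ ω ∂μ, |X ω| ≤ c' := hc.mono fun ω h => h.trans (le_abs_self c)
  have hXi : Integrable X μ := by
    have hmem : MemLp X ⊤ μ :=
      memLp_top_of_bound hXmeas.aestronglyMeasurable c'
        (hc'.mono fun ω h => by simpa [Real.norm_eq_abs] using h)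
    exact hmem.integrable le_top
  obtain ⟨N, hN⟩ := exists_nat_gt (c' / ε)
  have hNε : c' < N * ε := by
    rw [div_lt_iff₀ hε] at hN
    exact hN
  set A : ℤ → Set Ω := fun k => X ⁻¹' Set.Ico (k * ε) ((k + 1) * ε) with hA_def
  have hAmeas : ∀ k, MeasurableSet (A k) := fun k => hXmeas measurableSet_Ico
  have hAdisj : ∀ k l : ℤ, k ≠ l → Disjoint (A k) (A l) := by
    intro k l hkl
    rw [Set.disjoint_left]
    intro ω h1 h2
    simp only [hA_def, Set.mem_preimage, Set.mem_Ico] at h1 h2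
    rcases lt_or_gt_of_ne hkl with h | h
    · have hkl' : (k : ℝ) + 1 ≤ l := by exact_mod_cast h
      nlinarith [h1.2, h2.1]
    · have hkl' : (l : ℝ) + 1 ≤ k := by exact_mod_cast h
      nlinarith [h2.2, h1.1]
  have hcover : ∀ ω, |X ω| ≤ c' → ∃ k ∈ Finset.Ico (-(N : ℤ)) (N : ℤ), ω ∈ A k := by
    intro ω hω
    have habs := abs_le.1 hω
    refine ⟨⌊X ω / ε⌋, ?_, ?_⟩
    · rw [Finset.mem_Ico]
      constructor
      · rw [Int.le_floor]
        push_cast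
        rw [le_div_iff₀ hε]
        nlinarith
      · rw [Int.floor_lt]
        push_cast
        rw [div_lt_iff₀ hε]
        nlinarith
    · simp only [hA_def, Set.mem_preimage, Set.mem_Ico]
      constructor
      · have := Int.floor_le (X ω / ε)
        rw [le_div_iff₀ hε] at this
        linarith
      · have := Int.lt_floor_add_one (X ω / ε)
        rw [div_lt_iff₀ hε] at this
        push_cast
        linarith
  set K : Finset ℤ := (Finset.Ico (-(N : ℤ)) (N : ℤ)).filter (fun k => 0 < μ (A k)) with hK_def
  have hae_cover : ∀ᵐ ω ∂μ, ∃ k ∈ K, ω ∈ A k := by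
    have hnull : ∀ᵐ ω ∂μ, ∀ k ∈ ((Finset.Ico (-(N : ℤ)) (N : ℤ) : Finset ℤ) : Set ℤ),
        μ (A k) = 0 → ω ∉ A k := by
      rw [ae_ball_iff (Finset.countable_toSet _)]
      intro k hk
      by_cases h0 : μ (A k) = 0
      · exact (measure_eq_zero_iff_ae_notMem.1 h0).mono fun ω h _ => h
      · filter_upwards with ω h
        exact absurd h h0
    filter_upwards [hc', hnull] with ω hω hn
    obtain ⟨k, hk, hωk⟩ := hcover ω hω
    have hpos : 0 < μ (A k) := by
      rcases eq_or_ne (μ (A k)) 0 with h | h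
      · exact absurd hωk (hn k hk h)
      · exact pos_iff_ne_zero.2 h
    exact ⟨k, Finset.mem_filter.2 ⟨hk, hpos⟩, hωk⟩
  have hKne : K.Nonempty := by
    by_contra hne
    rw [Finset.not_nonempty_iff_eq_empty] at hne
    have hfalse : ∀ᵐ ω ∂μ, False := hae_cover.mono (by simp [hne])
    rw [ae_iff] at hfalse
    simp only [not_false_eq_true, Set.setOf_true] at hfalse
    rw [measure_univ] at hfalse
    exact one_ne_zero hfalse
  obtain ⟨k₀, hk₀⟩ := hKne
  set B0 : Set Ω := (⋃ k ∈ K.erase k₀, A k)ᶜ with hB0_def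
  have hA0sub : A k₀ ⊆ B0 := by
    intro ω hω
    simp only [hB0_def, Set.mem_compl_iff, Set.mem_iUnion, not_exists]
    intro k hk
    exact fun hωk => Set.disjoint_left.1
      (hAdisj k₀ k (Ne.symm (Finset.ne_of_mem_erase hk))) hω hωk
  have hB0meas : MeasurableSet B0 :=
    (Finset.measurableSet_biUnion _ fun k _ => hAmeas k).compl
  set π₀ : Finset (Set Ω) := insert B0 ((K.erase k₀).image A) with hπ₀_def
  have hmemπ₀ : ∀ B ∈ π₀, B = B0 ∨ ∃ k ∈ K.erase k₀, A k = B := by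
    intro B hB
    rcases Finset.mem_insert.1 hB with h | h
    · exact Or.inl h
    · obtain ⟨k, hk, hkB⟩ := Finset.mem_image.1 h
      exact Or.inr ⟨k, hk, hkB⟩
  have hKpos : ∀ k ∈ K, 0 < μ (A k) := fun k hk => (Finset.mem_filter.1 hk).2
  have hπ₀part : IsFinPartition μ π₀ := by
    refine ⟨?_, ?_, ?_, ?_⟩
    · intro B hB
      rcases hmemπ₀ B hB with h | ⟨k, _, hkB⟩
      · rw [h]; exact hB0meas
      · rw [← hkB]; exact hAmeas k
    · intro B hB
      rcases hmemπ₀ B hB with h | ⟨k, hk, hkB⟩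
      · rw [h]
        exact lt_of_lt_of_le (hKpos k₀ hk₀) (measure_mono hA0sub)
      · rw [← hkB]
        exact hKpos k (Finset.mem_of_mem_erase hk)
    · intro s hs t ht hst
      have hsub : ∀ k ∈ K.erase k₀, A k ⊆ ⋃ l ∈ K.erase k₀, A l := by
        intro k hk ω hω
        exact Set.mem_biUnion hk hω
      rcases hmemπ₀ s (Finset.mem_coe.1 hs) with hs' | ⟨k, hk, hks⟩ <;>
        rcases hmemπ₀ t (Finset.mem_coe.1 ht) with ht' | ⟨l, hl, hlt⟩
      · exact absurd (hs'.trans ht'.symm) hst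
      · subst hs'; rw [← hlt]
        exact disjoint_compl_left.mono_right (hsub l hl)
      · subst ht'; rw [← hks]
        exact (disjoint_compl_left.mono_right (hsub k hk)).symm
      · rw [← hks, ← hlt]
        apply hAdisj
        rintro rfl
        exact hst (hks.symm.trans hlt)
    · have hcoe : (π₀ : Set (Set Ω)) = insert B0 (A '' ((K.erase k₀) : Set ℤ)) := by
        simp [hπ₀_def]
      rw [hcoe, Set.sUnion_insert, Set.sUnion_image]
      rw [hB0_def]
      exact Set.compl_union_self _
  have hπ₀Icc : ∀ B ∈ π₀, ∃ a b : ℝ, b - a ≤ ε ∧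
      ∀ᵐ ω ∂μ, ω ∈ B → X ω ∈ Set.Icc a b := by
    intro B hB
    rcases hmemπ₀ B hB with h | ⟨k, hk, hkB⟩
    · refine ⟨k₀ * ε, (k₀ + 1) * ε, by ring_nf; linarith, ?_⟩
      filter_upwards [hae_cover] with ω hcov hωB
      obtain ⟨k, hkK, hωk⟩ := hcov
      have hkk₀ : k = k₀ := by
        by_contra hne
        have hkE : k ∈ K.erase k₀ := Finset.mem_erase.2 ⟨hne, hkK⟩
        rw [h] at hωB
        simp only [hB0_def, Set.mem_compl_iff, Set.mem_iUnion, not_exists] at hωB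
        exact hωB k hkE hωk
      subst hkk₀
      simp only [hA_def, Set.mem_preimage, Set.mem_Ico] at hωk
      exact ⟨hωk.1, le_of_lt hωk.2⟩
    · refine ⟨k * ε, (k + 1) * ε, by ring_nf; linarith, ?_⟩
      filter_upwards with ω hωB
      rw [← hkB] at hωB
      simp only [hA_def, Set.mem_preimage, Set.mem_Ico] at hωB
      exact ⟨hωB.1, le_of_lt hωB.2⟩
  refine ⟨π₀, hπ₀part, ?_⟩
  intro π hπ href
  apply key_bound hXi hπ
  intro S hS
  obtain ⟨B, hB, hSB⟩ := href S hS
  obtain ⟨a, b, hab, hae⟩ := hπ₀Icc B hB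
  exact ⟨a, b, hab, hae.mono fun ω h hωS => h (hSB hωS)⟩

end OrliczPaper
end
end

section
/- Let (Ω, F, ℙ) be a probability space and Φ an Orlicz function satisfying the Δ₂ condition (there exist t₀ > 0 and k ∈ ℝ with Φ(2t) ≤ kΦ(t) for all t ≥ t₀). Then every proper, quasiconvex, law-invariant functional ρ : L^Φ → (−∞, ∞] that is lower semicontinuous with respect to the Luxemburg norm has the Fatou property. -/
open MeasureTheory ENNReal Filter Set

noncomputable section

namespace OrliczPaper

variable {Ω : Type*} [MeasurableSpace Ω]

section Aux

variable {Φ : ℝ → ℝ}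

lemma phi_nonneg (hΦ : IsOrliczFunction Φ) {t : ℝ} (ht : 0 ≤ t) : 0 ≤ Φ t := hΦ.2.2.2 t ht

lemma phi_le_linear (hΦ : IsOrliczFunction Φ) {t s : ℝ} (ht : 0 ≤ t) (hts : t ≤ s)
    (hs : 0 < s) : Φ t ≤ t / s * Φ s := by
  have ha : (0:ℝ) ≤ t / s := div_nonneg ht hs.le
  have hb : (0:ℝ) ≤ 1 - t / s := by rw [sub_nonneg, div_le_one hs]; exact hts
  have h := hΦ.1.2 (mem_Ici.2 hs.le) (mem_Ici.2 (le_refl (0:ℝ))) ha hb (by ring)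
  have hx : (t / s) • s + (1 - t / s) • (0:ℝ) = t := by
    field_simp
    rw [smul_eq_mul, smul_zero, add_zero, div_mul_cancel₀ t hs.ne']
  rw [hx] at h
  calc Φ t ≤ (t / s) • Φ s + (1 - t / s) • Φ 0 := h
    _ = t / s * Φ s := by rw [hΦ.2.2.1]; simp [smul_eq_mul]

lemma monotone_gext (hΦ : IsOrliczFunction Φ) : Monotone (fun t => Φ (max t 0)) := by
  intro a b hab
  exact hΦ.2.1 (mem_Ici.2 (le_max_right a 0)) (mem_Ici.2 (le_max_right b 0))
    (max_le_max hab le_rfl)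

lemma meas_mod {Ω' : Type*} [MeasurableSpace Ω'] (hΦ : IsOrliczFunction Φ)
    {X : Ω' → ℝ} (hX : Measurable X) {l : ℝ} (hl : 0 < l) :
    Measurable (fun ω => ENNReal.ofReal (Φ (|X ω| / l))) := by
  have heq : (fun ω => ENNReal.ofReal (Φ (|X ω| / l)))
      = fun ω => ENNReal.ofReal ((fun t => Φ (max t 0)) (|X ω| / l)) := by
    funext ω
    simp only []
    rw [max_eq_left (div_nonneg (abs_nonneg _) hl.le)]
  rw [heq]
  exact ENNReal.measurable_ofReal.comp
    ((monotone_gext hΦ).measurable.comp ((hX.abs).div_const l))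

lemma delta2_pow (hΦ : IsOrliczFunction Φ) {t₀ k : ℝ} (ht₀ : 0 < t₀)
    (hk : ∀ t : ℝ, t₀ ≤ t → Φ (2 * t) ≤ k * Φ t) :
    ∀ (m : ℕ) (s : ℝ), t₀ ≤ s → Φ (2 ^ m * s) ≤ (max k 1) ^ m * Φ s := by
  intro m
  induction m with
  | zero => intro s hs; simp
  | succ m ih =>
    intro s hs
    have h2s : t₀ ≤ 2 * s := by linarith
    have hΦs : 0 ≤ Φ s := phi_nonneg hΦ (le_trans ht₀.le hs)
    calc Φ (2 ^ (m + 1) * s) = Φ (2 ^ m * (2 * s)) := by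
          rw [show (2:ℝ) ^ (m + 1) * s = 2 ^ m * (2 * s) by ring]
      _ ≤ (max k 1) ^ m * Φ (2 * s) := ih _ h2s
      _ ≤ (max k 1) ^ m * (max k 1 * Φ s) := by
          refine mul_le_mul_of_nonneg_left ?_ (by positivity)
          exact le_trans (hk s hs) (mul_le_mul_of_nonneg_right (le_max_left _ _) hΦs)
      _ = (max k 1) ^ (m + 1) * Φ s := by ring

lemma delta2_bound (hΦ : IsOrliczFunction Φ) {t₀ k : ℝ} (ht₀ : 0 < t₀)
    (hk : ∀ t : ℝ, t₀ ≤ t → Φ (2 * t) ≤ k * Φ t) (m : ℕ) {s : ℝ} (hs : 0 ≤ s) :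
    Φ (2 ^ m * s) ≤ (max k 1) ^ m * Φ s + Φ (2 ^ m * t₀) := by
  have hΦt₀ : 0 ≤ Φ (2 ^ m * t₀) := phi_nonneg hΦ (by positivity)
  rcases le_or_gt t₀ s with h | h
  · have := delta2_pow hΦ ht₀ hk m s h
    linarith
  · have h1 : Φ (2 ^ m * s) ≤ Φ (2 ^ m * t₀) :=
      hΦ.2.1 (mem_Ici.2 (by positivity)) (mem_Ici.2 (by positivity))
        (mul_le_mul_of_nonneg_left h.le (by positivity))
    have h2 : 0 ≤ (max k 1) ^ m * Φ s := by
      have := phi_nonneg hΦ hs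
      positivity
    linarith

lemma modular_lt_top {Ω' : Type*} [MeasurableSpace Ω'] (hΦ : IsOrliczFunction Φ)
    (hΔ₂ : Delta2 Φ) (μ : Measure Ω') [IsProbabilityMeasure μ] {Y : Ω' → ℝ}
    (hYm : Measurable Y) (hY : luxNorm Φ μ Y < ⊤) {l : ℝ} (hl : 0 < l) :
    modular Φ μ Y l < ⊤ := by
  obtain ⟨t₀, ht₀, k, hk⟩ := hΔ₂
  have hne : {l' : ℝ≥0∞ | 0 < l' ∧ l' ≠ ⊤ ∧ modular Φ μ Y l'.toReal ≤ 1}.Nonempty := by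
    by_contra h
    rw [not_nonempty_iff_eq_empty] at h
    rw [luxNorm, h, sInf_empty] at hY
    exact lt_irrefl _ hY
  obtain ⟨l₀, hl₀pos, hl₀top, hl₀mod⟩ := hne
  set r := l₀.toReal with hr
  have hrpos : 0 < r := ENNReal.toReal_pos hl₀pos.ne' hl₀top
  obtain ⟨m, hm⟩ := pow_unbounded_of_one_lt (r / l) (by norm_num : (1:ℝ) < 2)
  set K := max k 1 with hK
  have hK0 : 0 < K := lt_of_lt_of_le zero_lt_one (le_max_right _ _)
  have hpt : ∀ ω, Φ (|Y ω| / l) ≤ K ^ m * Φ (|Y ω| / r) + Φ (2 ^ m * t₀) := by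
    intro ω
    have hYa : 0 ≤ |Y ω| := abs_nonneg _
    have h1 : |Y ω| / l ≤ 2 ^ m * (|Y ω| / r) := by
      have heq : |Y ω| / l = (r / l) * (|Y ω| / r) := by
        field_simp
      rw [heq]
      exact mul_le_mul_of_nonneg_right hm.le (div_nonneg hYa hrpos.le)
    have h2 : Φ (|Y ω| / l) ≤ Φ (2 ^ m * (|Y ω| / r)) :=
      hΦ.2.1 (mem_Ici.2 (by positivity)) (mem_Ici.2 (by positivity)) h1
    exact h2.trans (delta2_bound hΦ ht₀ hk m (by positivity))
  have hΦr : ∀ ω, 0 ≤ Φ (|Y ω| / r) := fun ω => phi_nonneg hΦ (by positivity)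
  calc modular Φ μ Y l
      ≤ ∫⁻ ω, (ENNReal.ofReal (K ^ m) * ENNReal.ofReal (Φ (|Y ω| / r))
          + ENNReal.ofReal (Φ (2 ^ m * t₀))) ∂μ := by
        apply lintegral_mono
        intro ω
        have hKm : (0:ℝ) ≤ K ^ m := pow_nonneg hK0.le m
        calc ENNReal.ofReal (Φ (|Y ω| / l))
            ≤ ENNReal.ofReal (K ^ m * Φ (|Y ω| / r) + Φ (2 ^ m * t₀)) :=
              ENNReal.ofReal_le_ofReal (hpt ω)
          _ = _ := by
              rw [ENNReal.ofReal_add (mul_nonneg hKm (hΦr ω))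
                (phi_nonneg hΦ (by positivity)), ENNReal.ofReal_mul hKm]
    _ = ENNReal.ofReal (K ^ m) * modular Φ μ Y r
          + ENNReal.ofReal (Φ (2 ^ m * t₀)) * μ Set.univ := by
        rw [lintegral_add_right _ measurable_const,
          lintegral_const_mul _ (meas_mod hΦ hYm hrpos), lintegral_const]
        rfl
    _ < ⊤ := by
        apply ENNReal.add_lt_top.2
        constructor
        · exact ENNReal.mul_lt_top ENNReal.ofReal_lt_top
            (hl₀mod.trans_lt ENNReal.one_lt_top)
        · exact ENNReal.mul_lt_top ENNReal.ofReal_lt_top (measure_lt_top μ _)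

lemma luxNorm_tendsto_zero {Ω' : Type*} [MeasurableSpace Ω'] (hΦ : IsOrliczFunction Φ)
    (hΔ₂ : Delta2 Φ) (μ : Measure Ω') [IsProbabilityMeasure μ]
    {X : ℕ → Ω' → ℝ} {X₀ : Ω' → ℝ}
    (hXm : ∀ n, Measurable (X n)) (hX₀m : Measurable X₀)
    (hconv : OrderConvSeq Φ μ X X₀) :
    Tendsto (fun n => luxNorm Φ μ (fun ω => X n ω - X₀ ω)) atTop (nhds 0) := by
  obtain ⟨hae, Y, hYmem, hdom⟩ := hconv
  have hae2 : ∀ᵐ ω ∂μ, Tendsto (fun n => X n ω) atTop (nhds (X₀ ω)) ∧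
      ∀ n, |X n ω| ≤ Y ω := by
    filter_upwards [hae, ae_all_iff.2 hdom] with ω h1 h2 using ⟨h1, h2⟩
  have key : ∀ l : ℝ, 0 < l →
      Tendsto (fun n => modular Φ μ (fun ω => X n ω - X₀ ω) l) atTop (nhds 0) := by
    intro l hl
    set bound : Ω' → ℝ≥0∞ := fun ω => ENNReal.ofReal (Φ (|2 * max (Y ω) 0| / l))
      with hbdef
    have hbound_int : (∫⁻ ω, bound ω ∂μ) ≠ ⊤ := by
      have hfin := modular_lt_top hΦ hΔ₂ μ hYmem.1 hYmem.2 (half_pos hl)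
      refine ne_of_lt (lt_of_le_of_lt ?_ hfin)
      apply lintegral_mono
      intro ω
      apply ENNReal.ofReal_le_ofReal
      apply hΦ.2.1 (mem_Ici.2 (by positivity)) (mem_Ici.2 (by positivity))
      have h1 : max (Y ω) 0 ≤ |Y ω| := max_le (le_abs_self _) (abs_nonneg _)
      have h2 : |2 * max (Y ω) 0| = 2 * max (Y ω) 0 := abs_of_nonneg (by positivity)
      rw [h2, div_div_eq_mul_div]
      exact div_le_div_of_nonneg_right (by linarith) hl.le
    have hmeas : ∀ n, Measurable
        (fun ω => ENNReal.ofReal (Φ (|X n ω - X₀ ω| / l))) := fun n =>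
      meas_mod hΦ ((hXm n).sub hX₀m) hl
    have hb : ∀ n, (fun ω => ENNReal.ofReal (Φ (|X n ω - X₀ ω| / l))) ≤ᵐ[μ] bound := by
      intro n
      filter_upwards [hae2] with ω hω
      apply ENNReal.ofReal_le_ofReal
      have hY0 : 0 ≤ Y ω := le_trans (abs_nonneg _) (hω.2 0)
      have hX₀le : |X₀ ω| ≤ Y ω := by
        have habs : Tendsto (fun n => |X n ω|) atTop (nhds (|X₀ ω|)) :=
          hω.1.abs
        exact le_of_tendsto habs (Eventually.of_forall hω.2)
      have hdiff : |X n ω - X₀ ω| ≤ 2 * max (Y ω) 0 := by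
        rw [max_eq_left hY0]
        calc |X n ω - X₀ ω| ≤ |X n ω| + |X₀ ω| := abs_sub _ _
          _ ≤ Y ω + Y ω := add_le_add (hω.2 n) hX₀le
          _ = 2 * Y ω := by ring
      apply hΦ.2.1 (mem_Ici.2 (by positivity)) (mem_Ici.2 (by positivity))
      rw [abs_of_nonneg (by positivity : (0:ℝ) ≤ 2 * max (Y ω) 0)]
      exact div_le_div_of_nonneg_right hdiff hl.le
    have hlim : ∀ᵐ ω ∂μ, Tendsto
        (fun n => ENNReal.ofReal (Φ (|X n ω - X₀ ω| / l))) atTop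
        (nhds ((fun _ : Ω' => (0:ℝ≥0∞)) ω)) := by
      filter_upwards [hae2] with ω hω
      have ht : Tendsto (fun n => |X n ω - X₀ ω| / l) atTop (nhds 0) := by
        have h0 : Tendsto (fun n => X n ω - X₀ ω) atTop (nhds (X₀ ω - X₀ ω)) :=
          hω.1.sub tendsto_const_nhds
        rw [sub_self] at h0
        simpa using (h0.abs).div_const l
      have hΦt : Tendsto (fun n => Φ (|X n ω - X₀ ω| / l)) atTop (nhds 0) := by
        apply squeeze_zero' (Eventually.of_forall fun n =>
          phi_nonneg hΦ (by positivity))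
        · have hev : ∀ᶠ n in atTop, |X n ω - X₀ ω| / l ≤ 1 :=
            ht.eventually_le_const (by norm_num : (0:ℝ) < 1)
          filter_upwards [hev] with n hn
          calc Φ (|X n ω - X₀ ω| / l)
              ≤ (|X n ω - X₀ ω| / l) / 1 * Φ 1 :=
                phi_le_linear hΦ (by positivity) hn one_pos
            _ = |X n ω - X₀ ω| / l * Φ 1 := by ring
        · simpa using ht.mul_const (Φ 1)
      simpa using ENNReal.tendsto_ofReal hΦt
    have h := tendsto_lintegral_of_dominated_convergence bound hmeas hb hbound_int hlim
    simpa [modular, lintegral_zero] using h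
  rw [ENNReal.tendsto_nhds_zero]
  intro ε hε
  set ε' := min ε 1 with hε'def
  have hε' : 0 < ε' := lt_min hε zero_lt_one
  have hε'top : ε' ≠ ⊤ := ((min_le_right ε 1).trans_lt ENNReal.one_lt_top).ne
  have hε'r : 0 < ε'.toReal := ENNReal.toReal_pos hε'.ne' hε'top
  filter_upwards [(key ε'.toReal hε'r).eventually_lt_const zero_lt_one] with n hn
  calc luxNorm Φ μ (fun ω => X n ω - X₀ ω) ≤ ε' := sInf_le ⟨hε', hε'top, hn.le⟩
    _ ≤ ε := min_le_left _ _

end Aux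

/-- under the Δ₂ condition, every proper, quasiconvex, law-invariant,
norm lower semicontinuous functional on `L^Φ` has the Fatou property. -/
theorem fatou_of_normLSC_of_delta2
    {Ω : Type*} [MeasurableSpace Ω] (μ : Measure Ω) [IsProbabilityMeasure μ]
    (Φ : ℝ → ℝ) (hΦ : IsOrliczFunction Φ) (hΦ' : StandingAssumptions Φ)
    (hΔ₂ : Delta2 Φ)
    (ρ : (Ω → ℝ) → EReal) (hproper : ProperFun Φ μ ρ)
    (hqc : QuasiconvexFun Φ μ ρ) (hli : LawInvariantFun Φ μ ρ)
    (hlsc : NormLSC Φ μ ρ) :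
    FatouProperty Φ μ ρ := by
  intro X X₀ hX hX₀ hconv
  by_contra hcon
  rw [not_le] at hcon
  obtain ⟨c, hc1, hc2⟩ := EReal.exists_between_coe_real hcon
  have hfreq : ∃ᶠ n in atTop, ρ (X n) < (c : EReal) :=
    frequently_lt_of_liminf_lt (by isBoundedDefault) hc1
  obtain ⟨φ, hφ, hφle⟩ := Filter.extraction_of_frequently_atTop hfreq
  obtain ⟨hae, Y, hYmem, hdom⟩ := hconv
  have hconv' : OrderConvSeq Φ μ (fun k => X (φ k)) X₀ :=
    ⟨by filter_upwards [hae] with ω h using h.comp hφ.tendsto_atTop,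
      Y, hYmem, fun k => hdom (φ k)⟩
  have hnorm := luxNorm_tendsto_zero hΦ hΔ₂ μ (fun k => (hX (φ k)).1) hX₀.1 hconv'
  have hmem := hlsc c (fun k => X (φ k)) X₀
    (fun k => ⟨hX (φ k), (hφle k).le⟩) hX₀ hnorm
  exact absurd hmem.2 (not_le.2 hc2)

end OrliczPaper
end
end

section
/- Let (Ω, F, ℙ) be a probability space, Φ an Orlicz function, and X ∈ L^Φ. The conditional expectations E[X|π] converge to X in the Luxemburg norm along the net of finite measurable partitions directed by refinement if and only if X belongs to the Orlicz heart H^Φ. -/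
open MeasureTheory ENNReal Filter Set

noncomputable section

namespace OrliczPaper

variable {Ω : Type*} [MeasurableSpace Ω]

section Aux
variable {Φ : ℝ → ℝ}

lemma phi_le_linear_s19 (hΦ : IsOrliczFunction Φ) {t : ℝ} (h0 : 0 ≤ t) (h1 : t ≤ 1) :
    Φ t ≤ t * Φ 1 := by
  have := hΦ.1.2 (by simp : (1:ℝ) ∈ Set.Ici (0:ℝ)) (le_refl (0:ℝ) : (0:ℝ) ∈ Set.Ici (0:ℝ))
    h0 (by linarith : (0:ℝ) ≤ 1 - t) (by ring)
  simpa [hΦ.2.2.1] using this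

lemma phi_continuousOn (hΦ : IsOrliczFunction Φ) : ContinuousOn Φ (Set.Ici (0:ℝ)) := by
  intro x hx
  rcases eq_or_lt_of_le (Set.mem_Ici.mp hx : (0:ℝ) ≤ x) with h | h
  · -- x = 0
    subst h
    rw [ContinuousWithinAt, hΦ.2.2.1]
    apply squeeze_zero' (g := fun t => t * Φ 1)
    · filter_upwards [self_mem_nhdsWithin] with t ht
      exact hΦ.2.2.2 t ht
    · have h1 : ∀ᶠ t : ℝ in nhdsWithin 0 (Set.Ici 0), t < 1 := by
        apply eventually_nhdsWithin_of_eventually_nhds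
        exact Filter.Tendsto.eventually_lt_const (by norm_num) Filter.tendsto_id
      filter_upwards [self_mem_nhdsWithin, h1] with t ht ht1
      exact phi_le_linear_s19 hΦ ht ht1.le
    · have : Filter.Tendsto (fun t : ℝ => t * Φ 1) (nhds 0) (nhds (0 * Φ 1)) :=
        (continuous_id.mul continuous_const).tendsto 0
      simpa using this.mono_left nhdsWithin_le_nhds
  · -- x > 0
    have hco : ContinuousOn Φ (Set.Ioi (0:ℝ)) :=
      ConvexOn.continuousOn isOpen_Ioi (hΦ.1.subset Set.Ioi_subset_Ici_self (convex_Ioi 0))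
    exact (hco.continuousAt (Ioi_mem_nhds h)).continuousWithinAt

lemma phi_split (hΦ : IsOrliczFunction Φ) {a b l : ℝ} (ha : 0 ≤ a) (hb : 0 ≤ b) (hl : 0 < l) :
    Φ ((a + b) / l) ≤ 2⁻¹ * Φ (a / (l/2)) + 2⁻¹ * Φ (b / (l/2)) := by
  have key := hΦ.1.2 (Set.mem_Ici.mpr (by positivity : (0:ℝ) ≤ 2*a/l))
    (Set.mem_Ici.mpr (by positivity : (0:ℝ) ≤ 2*b/l))
    (by norm_num : (0:ℝ) ≤ 2⁻¹) (by norm_num : (0:ℝ) ≤ 2⁻¹) (by norm_num)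
  have e1 : (2:ℝ)⁻¹ • (2*a/l) + (2:ℝ)⁻¹ • (2*b/l) = (a+b)/l := by
    simp only [smul_eq_mul]; field_simp
  have e2 : a / (l/2) = 2*a/l := by field_simp
  have e3 : b / (l/2) = 2*b/l := by field_simp
  rw [e1] at key
  rw [e2, e3]
  simpa [smul_eq_mul] using key

lemma phi_comp_measurable (hΦ : IsOrliczFunction Φ) {Ω : Type*} [MeasurableSpace Ω]
    {h : Ω → ℝ} (hh : Measurable h) (hpos : ∀ ω, 0 ≤ h ω) :
    Measurable fun ω => Φ (h ω) := by
  have hm : Monotone (fun t : ℝ => Φ (max t 0)) := by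
    intro s t hst
    exact hΦ.2.1 (by simp : max s 0 ∈ Set.Ici (0:ℝ)) (by simp) (max_le_max hst le_rfl)
  have := hm.measurable.comp hh
  convert this using 1
  funext ω
  simp [max_eq_left (hpos ω)]

section Mod
variable {Ω : Type*} [MeasurableSpace Ω] {μ : Measure Ω}

lemma modular_congr_ae {X Y : Ω → ℝ} (h : X =ᵐ[μ] Y) (l : ℝ) :
    modular Φ μ X l = modular Φ μ Y l := by
  apply lintegral_congr_ae; filter_upwards [h] with ω hω; rw [hω]

lemma modular_mono_ae (hΦ : IsOrliczFunction Φ) {X Y : Ω → ℝ} {l₁ l₂ : ℝ}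
    (hl₁ : 0 < l₁) (hl₂ : 0 < l₂)
    (h : ∀ᵐ ω ∂μ, |X ω| / l₂ ≤ |Y ω| / l₁) :
    modular Φ μ X l₂ ≤ modular Φ μ Y l₁ := by
  apply lintegral_mono_ae; filter_upwards [h] with ω hω
  exact ENNReal.ofReal_le_ofReal
    (hΦ.2.1 (Set.mem_Ici.mpr (by positivity)) (Set.mem_Ici.mpr (by positivity)) hω)

lemma modular_scale_mono (hΦ : IsOrliczFunction Φ) {X : Ω → ℝ} {l₁ l₂ : ℝ}
    (hl₁ : 0 < l₁) (hl : l₁ ≤ l₂) : modular Φ μ X l₂ ≤ modular Φ μ X l₁ := by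
  apply modular_mono_ae hΦ hl₁ (lt_of_lt_of_le hl₁ hl)
  filter_upwards with ω
  exact div_le_div_of_nonneg_left (abs_nonneg _) hl₁ hl

lemma modular_le_of_bound (hΦ : IsOrliczFunction Φ) [IsProbabilityMeasure μ] {X : Ω → ℝ}
    {δ l : ℝ} (hδ : 0 ≤ δ) (hl : 0 < l) (h : ∀ᵐ ω ∂μ, |X ω| ≤ δ) :
    modular Φ μ X l ≤ ENNReal.ofReal (Φ (δ / l)) := by
  have hl' := hl
  have : modular Φ μ X l ≤ ∫⁻ _, ENNReal.ofReal (Φ (δ / l)) ∂μ := by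
    apply lintegral_mono_ae; filter_upwards [h] with ω hω
    refine ENNReal.ofReal_le_ofReal (hΦ.2.1 (Set.mem_Ici.mpr (by positivity))
      (Set.mem_Ici.mpr (by positivity)) (by gcongr))
  simpa using this

lemma ofReal_half : ENNReal.ofReal ((2:ℝ)⁻¹) = 2⁻¹ := by
  rw [ENNReal.ofReal_inv_of_pos (by norm_num)]; norm_num

lemma modular_add_le (hΦ : IsOrliczFunction Φ) {X Y : Ω → ℝ}
    (hX : Measurable X) (hY : Measurable Y) {l : ℝ} (hl : 0 < l) :
    modular Φ μ (fun ω => X ω + Y ω) l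
      ≤ 2⁻¹ * modular Φ μ X (l/2) + 2⁻¹ * modular Φ μ Y (l/2) := by
  have hl2 : (0:ℝ) < l/2 := by linarith
  have hmX : Measurable fun ω => ENNReal.ofReal (Φ (|X ω| / (l/2))) :=
    (phi_comp_measurable hΦ ((hX.abs).div_const _) (fun ω => by positivity)).ennreal_ofReal
  have hmY : Measurable fun ω => ENNReal.ofReal (Φ (|Y ω| / (l/2))) :=
    (phi_comp_measurable hΦ ((hY.abs).div_const _) (fun ω => by positivity)).ennreal_ofReal
  calc modular Φ μ (fun ω => X ω + Y ω) l
      ≤ ∫⁻ ω, (2⁻¹ * ENNReal.ofReal (Φ (|X ω| / (l/2)))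
          + 2⁻¹ * ENNReal.ofReal (Φ (|Y ω| / (l/2)))) ∂μ := by
        apply lintegral_mono; intro ω
        have h0 : |X ω + Y ω| / l ≤ (|X ω| + |Y ω|) / l := by
          gcongr; exact abs_add_le _ _
        have h1 : Φ (|X ω + Y ω| / l) ≤ 2⁻¹ * Φ (|X ω|/(l/2)) + 2⁻¹ * Φ (|Y ω|/(l/2)) :=
          le_trans (hΦ.2.1 (Set.mem_Ici.mpr (by positivity)) (Set.mem_Ici.mpr (by positivity)) h0)
            (phi_split hΦ (abs_nonneg _) (abs_nonneg _) hl)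
        have hΦX : 0 ≤ Φ (|X ω|/(l/2)) := hΦ.2.2.2 _ (by positivity)
        have hΦY : 0 ≤ Φ (|Y ω|/(l/2)) := hΦ.2.2.2 _ (by positivity)
        calc ENNReal.ofReal (Φ (|X ω + Y ω| / l))
            ≤ ENNReal.ofReal (2⁻¹ * Φ (|X ω|/(l/2)) + 2⁻¹ * Φ (|Y ω|/(l/2))) :=
              ENNReal.ofReal_le_ofReal h1
          _ = 2⁻¹ * ENNReal.ofReal (Φ (|X ω| / (l/2)))
              + 2⁻¹ * ENNReal.ofReal (Φ (|Y ω| / (l/2))) := by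
              rw [ENNReal.ofReal_add (by positivity) (by positivity),
                ENNReal.ofReal_mul (by norm_num), ENNReal.ofReal_mul (by norm_num), ofReal_half]
    _ = 2⁻¹ * modular Φ μ X (l/2) + 2⁻¹ * modular Φ μ Y (l/2) := by
        rw [lintegral_add_left (hmX.const_mul _), lintegral_const_mul _ hmX,
          lintegral_const_mul _ hmY]
        rfl

end Mod

section Part
variable {Ω : Type*} [MeasurableSpace Ω] {μ : Measure Ω} {π π₀ : Finset (Set Ω)}

lemma part_exists_unique (hπ : IsFinPartition μ π) (ω : Ω) :
    ∃ B ∈ π, ω ∈ B ∧ ∀ B' ∈ π, ω ∈ B' → B' = B := by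
  have hω : ω ∈ ⋃₀ (π : Set (Set Ω)) := hπ.2.2.2 ▸ Set.mem_univ ω
  obtain ⟨B, hB, hωB⟩ := hω
  refine ⟨B, Finset.mem_coe.mp hB, hωB, fun B' hB' hωB' => ?_⟩
  by_contra hne
  exact Set.disjoint_left.mp (hπ.2.2.1 (Finset.mem_coe.mpr hB') hB hne) hωB' hωB

lemma part_subset_or_disjoint (hπ : IsFinPartition μ π) {s : Set Ω}
    (hs : MeasurableSet[MeasurableSpace.generateFrom (π : Set (Set Ω))] s) :
    ∀ B ∈ π, B ⊆ s ∨ Disjoint B s := by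
  refine MeasurableSpace.generateFrom_induction (π : Set (Set Ω))
    (fun s _ => ∀ B ∈ π, B ⊆ s ∨ Disjoint B s) ?_ ?_ ?_ ?_ s hs
  · intro t ht _ B hB
    by_cases hBt : B = t
    · subst hBt; exact Or.inl subset_rfl
    · exact Or.inr (hπ.2.2.1 (Finset.mem_coe.mpr hB) ht hBt)
  · intro B _; exact Or.inr (Set.disjoint_empty B)
  · intro t _ hp B hB
    rcases hp B hB with h | h
    · exact Or.inr (by rw [Set.disjoint_left]; exact fun a haB hat => hat (h haB))
    · exact Or.inl (fun a haB => Set.disjoint_left.mp h haB)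
  · intro f _ hp B hB
    by_cases h : ∃ n, B ⊆ f n
    · obtain ⟨n, hn⟩ := h; exact Or.inl (hn.trans (Set.subset_iUnion f n))
    · push_neg at h
      refine Or.inr (Set.disjoint_iUnion_right.mpr fun n => ?_)
      rcases hp n B hB with h1 | h1
      · exact absurd h1 (h n)
      · exact h1

open scoped Classical in
lemma part_eq_biUnion (hπ : IsFinPartition μ π) {s : Set Ω}
    (hs : MeasurableSet[MeasurableSpace.generateFrom (π : Set (Set Ω))] s) :
    s = ⋃ B ∈ π.filter (fun B => B ⊆ s), B := by
  apply Set.Subset.antisymm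
  · intro ω hω
    obtain ⟨B, hB, hωB, -⟩ := part_exists_unique hπ ω
    rcases part_subset_or_disjoint hπ hs B hB with h | h
    · exact Set.mem_biUnion (Finset.mem_filter.mpr ⟨hB, h⟩) hωB
    · exact absurd hω (Set.disjoint_left.mp h hωB)
  · intro ω hω
    simp only [Set.mem_iUnion, exists_prop] at hω
    obtain ⟨B, hB, hωB⟩ := hω
    exact (Finset.mem_filter.mp hB).2 hωB

open scoped Classical in
lemma generateFrom_le_of_refines (hπ₀ : IsFinPartition μ π₀) (hπ : IsFinPartition μ π)
    (href : Refines π π₀) :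
    MeasurableSpace.generateFrom (π₀ : Set (Set Ω))
      ≤ MeasurableSpace.generateFrom (π : Set (Set Ω)) := by
  refine MeasurableSpace.generateFrom_le fun A hA => ?_
  have hAeq : A = ⋃ B ∈ π.filter (fun B => B ⊆ A), B := by
    apply Set.Subset.antisymm
    · intro ω hω
      obtain ⟨B, hB, hωB, -⟩ := part_exists_unique hπ ω
      obtain ⟨A', hA', hBA'⟩ := href B hB
      have hAA : A' = A := by
        by_contra hne
        exact Set.disjoint_left.mp (hπ₀.2.2.1 (Finset.mem_coe.mpr hA') hA hne) (hBA' hωB) hω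
      exact Set.mem_biUnion (Finset.mem_filter.mpr ⟨hB, hAA ▸ hBA'⟩) hωB
    · intro ω hω
      simp only [Set.mem_iUnion, exists_prop] at hω
      obtain ⟨B, hB, hωB⟩ := hω
      exact (Finset.mem_filter.mp hB).2 hωB
  rw [hAeq]
  exact Finset.measurableSet_biUnion _ fun B hB =>
    MeasurableSpace.measurableSet_generateFrom (Finset.mem_coe.mpr (Finset.mem_filter.mp hB).1)

end Part

section Proj
variable {Ω : Type*} [MeasurableSpace Ω] {μ : Measure Ω} {π : Finset (Set Ω)} {W : Ω → ℝ}

/-- Average of `W` on `B`. -/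
def pavg (μ : Measure Ω) (W : Ω → ℝ) (B : Set Ω) : ℝ := (μ B).toReal⁻¹ * ∫ x in B, W x ∂μ

/-- The conditional expectation of `W` w.r.t. a finite partition, written explicitly. -/
def pproj (μ : Measure Ω) (W : Ω → ℝ) (π : Finset (Set Ω)) : Ω → ℝ :=
  fun ω => ∑ B ∈ π, Set.indicator B (fun _ => pavg μ W B) ω

lemma pproj_measurable (hπ : IsFinPartition μ π) : Measurable (pproj μ W π) :=
  Finset.measurable_sum _ fun B hB => measurable_const.indicator (hπ.1 B hB)

lemma pproj_integrable [IsFiniteMeasure μ] (hπ : IsFinPartition μ π) :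
    Integrable (pproj μ W π) μ :=
  integrable_finset_sum _ fun B hB => (integrable_const _).indicator (hπ.1 B hB)

lemma pproj_spec (hπ : IsFinPartition μ π) {ω : Ω} {B : Set Ω} (hB : B ∈ π) (hωB : ω ∈ B) :
    pproj μ W π ω = pavg μ W B := by
  unfold pproj
  rw [Finset.sum_eq_single B]
  · rw [Set.indicator_of_mem hωB]
  · intro B' hB' hne
    refine Set.indicator_of_notMem (fun hmem => ?_) _
    exact Set.disjoint_left.mp (hπ.2.2.1 (Finset.mem_coe.mpr hB') (Finset.mem_coe.mpr hB) hne)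
      hmem hωB
  · intro h; exact absurd hB h

lemma pproj_ae_eq_condexp [IsProbabilityMeasure μ] (hπ : IsFinPartition μ π)
    (hW : Integrable W μ) :
    pproj μ W π =ᵐ[μ] μ[W | MeasurableSpace.generateFrom (π : Set (Set Ω))] := by
  classical
  have hm : MeasurableSpace.generateFrom (π : Set (Set Ω)) ≤ ‹MeasurableSpace Ω› :=
    MeasurableSpace.generateFrom_le fun A hA => hπ.1 A (Finset.mem_coe.mp hA)
  haveI : SigmaFinite (μ.trim hm) := inferInstance
  refine ae_eq_condExp_of_forall_setIntegral_eq hm hW ?_ ?_ ?_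
  · intro s _ _; exact (pproj_integrable hπ).integrableOn
  · intro s hs _
    have hdis : ((π.filter (fun B => B ⊆ s) : Finset (Set Ω)) : Set (Set Ω)).Pairwise
        (Function.onFun Disjoint (id : Set Ω → Set Ω)) :=
      hπ.2.2.1.subset (Finset.coe_subset.mpr (Finset.filter_subset _ _))
    have hmea : ∀ B ∈ π.filter (fun B => B ⊆ s), MeasurableSet B :=
      fun B hB => hπ.1 B (Finset.mem_filter.mp hB).1
    rw [part_eq_biUnion hπ hs,
      integral_biUnion_finset _ hmea hdis (fun B hB => (pproj_integrable hπ).integrableOn),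
      integral_biUnion_finset _ hmea hdis (fun B hB => hW.integrableOn)]
    refine Finset.sum_congr rfl fun B hB => ?_
    have hBπ : B ∈ π := (Finset.mem_filter.mp hB).1
    have h1 : ∫ x in B, pproj μ W π x ∂μ
        = ∑ B' ∈ π, ∫ x in B, Set.indicator B' (fun _ => pavg μ W B') x ∂μ :=
      integral_finset_sum _ fun B' hB' =>
        ((integrable_const _).indicator (hπ.1 B' hB')).integrableOn
    rw [h1, Finset.sum_eq_single B]
    · rw [setIntegral_indicator (hπ.1 B hBπ), Set.inter_self, setIntegral_const]
      have htR : (μ B).toReal ≠ 0 :=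
        ENNReal.toReal_ne_zero.mpr ⟨(hπ.2.1 B hBπ).ne', measure_ne_top μ B⟩
      rw [smul_eq_mul]
      unfold pavg
      rw [← mul_assoc, measureReal_def, mul_inv_cancel₀ htR, one_mul]
    · intro B' hB' hne
      rw [setIntegral_indicator (hπ.1 B' hB')]
      have : B ∩ B' = ∅ := Set.disjoint_iff_inter_eq_empty.mp
        (hπ.2.2.1 (Finset.mem_coe.mpr hBπ) (Finset.mem_coe.mpr hB') (fun h => hne h.symm))
      rw [this]
      simp
    · intro h; exact absurd hBπ h
  · refine StronglyMeasurable.aestronglyMeasurable ?_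
    have : Measurable[MeasurableSpace.generateFrom (π : Set (Set Ω))] (pproj μ W π) :=
      Finset.measurable_sum _ fun B hB => measurable_const.indicator
        (MeasurableSpace.measurableSet_generateFrom (Finset.mem_coe.mpr hB))
    exact this.stronglyMeasurable

lemma modular_pproj [IsProbabilityMeasure μ] (hπ : IsFinPartition μ π) {l : ℝ} :
    modular Φ μ (pproj μ W π) l
      = ∑ B ∈ π, ENNReal.ofReal (Φ (|pavg μ W B| / l)) * μ B := by
  have hpt : (fun ω => ENNReal.ofReal (Φ (|pproj μ W π ω| / l)))
      = fun ω => ∑ B ∈ π, Set.indicator B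
          (fun _ => ENNReal.ofReal (Φ (|pavg μ W B| / l))) ω := by
    funext ω
    obtain ⟨B, hB, hωB, huniq⟩ := part_exists_unique hπ ω
    have h2 : ∀ B' ∈ π, B' ≠ B →
        Set.indicator B' (fun _ => ENNReal.ofReal (Φ (|pavg μ W B'| / l))) ω = 0 :=
      fun B' hB' hne => Set.indicator_of_notMem (fun hmem => hne (huniq B' hB' hmem)) _
    rw [pproj_spec hπ hB hωB, Finset.sum_eq_single B h2 (fun h => absurd hB h),
      Set.indicator_of_mem hωB]
  show ∫⁻ ω, ENNReal.ofReal (Φ (|pproj μ W π ω| / l)) ∂μ = _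
  rw [hpt, lintegral_finset_sum _ (fun B hB => measurable_const.indicator (hπ.1 B hB))]
  refine Finset.sum_congr rfl fun B hB => ?_
  rw [lintegral_indicator (hπ.1 B hB), setLIntegral_const]

lemma modular_pproj_le [IsProbabilityMeasure μ] (hΦ : IsOrliczFunction Φ)
    (hπ : IsFinPartition μ π) (hWm : Measurable W) (hW : Integrable W μ) {l : ℝ}
    (hl : 0 < l) (hfin : modular Φ μ W l ≠ ⊤) :
    modular Φ μ (pproj μ W π) l ≤ modular Φ μ W l := by
  have hcomp : Measurable fun ω => Φ (|W ω| / l) :=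
    phi_comp_measurable hΦ (hWm.abs.div_const _) (fun ω => by positivity)
  have hnn : (0:Ω → ℝ) ≤ᵐ[μ] fun ω => Φ (|W ω| / l) := by
    filter_upwards with ω; exact hΦ.2.2.2 _ (by positivity)
  have hint : Integrable (fun ω => Φ (|W ω| / l)) μ := by
    refine ⟨hcomp.aestronglyMeasurable, ?_⟩
    rw [hasFiniteIntegral_iff_ofReal hnn]
    exact lt_top_iff_ne_top.mpr hfin
  have key : ∀ B ∈ π, ENNReal.ofReal (Φ (|pavg μ W B| / l)) * μ B
      ≤ ∫⁻ ω in B, ENNReal.ofReal (Φ (|W ω| / l)) ∂μ := by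
    intro B hB
    have hBm := hπ.1 B hB
    have hBne : μ B ≠ 0 := (hπ.2.1 B hB).ne'
    have hBfin : μ B ≠ ⊤ := measure_ne_top μ B
    have htRpos : 0 < (μ B).toReal := ENNReal.toReal_pos hBne hBfin
    haveI : NeZero (μ.restrict B) :=
      ⟨fun h => hBne (Measure.restrict_eq_zero.mp h)⟩
    have havg : Φ (⨍ x in B, (|W x| / l) ∂μ) ≤ ⨍ x in B, Φ (|W x| / l) ∂μ := by
      refine hΦ.1.map_average_le (phi_continuousOn hΦ) isClosed_Ici ?_ ?_ ?_
      · filter_upwards with x; exact Set.mem_Ici.mpr (by positivity)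
      · exact (hW.integrableOn.abs.div_const _)
      · exact hint.integrableOn
    have havg1 : ⨍ x in B, (|W x| / l) ∂μ
        = (μ B).toReal⁻¹ * ((∫ x in B, |W x| ∂μ) / l) := by
      rw [average_eq, measureReal_restrict_apply_univ, measureReal_def, smul_eq_mul, integral_div]
    have havg2 : ⨍ x in B, Φ (|W x| / l) ∂μ
        = (μ B).toReal⁻¹ * ∫ x in B, Φ (|W x| / l) ∂μ := by
      rw [average_eq, measureReal_restrict_apply_univ, measureReal_def, smul_eq_mul]
    have hle1 : |pavg μ W B| / l ≤ ⨍ x in B, (|W x| / l) ∂μ := by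
      rw [havg1]
      unfold pavg
      rw [abs_mul, abs_of_nonneg (inv_nonneg.mpr ENNReal.toReal_nonneg)]
      rw [div_eq_mul_inv, div_eq_mul_inv, mul_assoc]
      gcongr
      calc |∫ x in B, W x ∂μ| ≤ ∫ x in B, |W x| ∂μ := by
            simpa [Real.norm_eq_abs] using
              norm_integral_le_integral_norm (f := W) (μ := μ.restrict B)
        _ = ∫ x in B, |W x| ∂μ := rfl
    have hkey : Φ (|pavg μ W B| / l)
        ≤ (μ B).toReal⁻¹ * ∫ x in B, Φ (|W x| / l) ∂μ := by
      refine le_trans (hΦ.2.1 (Set.mem_Ici.mpr (by positivity)) ?_ hle1) (havg2 ▸ havg)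
      rw [havg1]; exact Set.mem_Ici.mpr (by positivity)
    calc ENNReal.ofReal (Φ (|pavg μ W B| / l)) * μ B
        ≤ ENNReal.ofReal ((μ B).toReal⁻¹ * ∫ x in B, Φ (|W x| / l) ∂μ) * μ B := by
          exact mul_le_mul_left (ENNReal.ofReal_le_ofReal hkey) _
      _ = (μ B)⁻¹ * ENNReal.ofReal (∫ x in B, Φ (|W x| / l) ∂μ) * μ B := by
          rw [ENNReal.ofReal_mul (inv_nonneg.mpr ENNReal.toReal_nonneg),
            ENNReal.ofReal_inv_of_pos htRpos, ENNReal.ofReal_toReal hBfin]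
      _ = ENNReal.ofReal (∫ x in B, Φ (|W x| / l) ∂μ) * ((μ B)⁻¹ * μ B) := by ring
      _ = ENNReal.ofReal (∫ x in B, Φ (|W x| / l) ∂μ) := by
          rw [ENNReal.inv_mul_cancel hBne hBfin, mul_one]
      _ = ∫⁻ ω in B, ENNReal.ofReal (Φ (|W ω| / l)) ∂μ := by
          rw [ofReal_integral_eq_lintegral_ofReal hint.integrableOn
            (ae_restrict_of_ae hnn)]
  calc modular Φ μ (pproj μ W π) l
      = ∑ B ∈ π, ENNReal.ofReal (Φ (|pavg μ W B| / l)) * μ B := modular_pproj hπ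
    _ ≤ ∑ B ∈ π, ∫⁻ ω in B, ENNReal.ofReal (Φ (|W ω| / l)) ∂μ :=
        Finset.sum_le_sum key
    _ = ∫⁻ ω in ⋃ B ∈ π, B, ENNReal.ofReal (Φ (|W ω| / l)) ∂μ :=
        (lintegral_biUnion_finset (t := fun B => B) hπ.2.2.1 (fun B hB => hπ.1 B hB) _).symm
    _ = modular Φ μ W l := by
        have hcov : ⋃ B ∈ π, (B : Set Ω) = Set.univ := by
          rw [← Finset.set_biUnion_coe, ← Set.sUnion_eq_biUnion, hπ.2.2.2]
        rw [hcov, Measure.restrict_univ]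
        rfl

end Proj

section HeartAux
variable {Ω : Type*} [MeasurableSpace Ω] {μ : Measure Ω}

lemma integrable_of_modular_fin [IsProbabilityMeasure μ] (hΦ : IsOrliczFunction Φ)
    (hΦ' : StandingAssumptions Φ) {X : Ω → ℝ} (hXm : Measurable X)
    (hfin : modular Φ μ X 1 ≠ ⊤) : Integrable X μ := by
  obtain ⟨t₀, ht₀⟩ := Filter.eventually_atTop.mp (Filter.tendsto_atTop.mp hΦ'.2 1)
  set c : ℝ := max t₀ 1 with hc
  have hc0 : (0:ℝ) ≤ c := le_trans zero_le_one (le_max_right _ _)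
  have hpt : ∀ ω, |X ω| ≤ c + Φ (|X ω|) := by
    intro ω
    by_cases h : |X ω| ≤ c
    · exact le_add_of_le_of_nonneg h (hΦ.2.2.2 _ (abs_nonneg _))
    · push_neg at h
      have h1 : t₀ ≤ |X ω| := le_trans (le_max_left _ _) h.le
      have h2 : (0:ℝ) < |X ω| := lt_of_lt_of_le (lt_of_lt_of_le zero_lt_one (le_max_right _ _)) h.le
      have h3 : 1 ≤ Φ (|X ω|) / |X ω| := ht₀ _ h1
      have h4 : |X ω| ≤ Φ (|X ω|) := (one_le_div h2).mp h3
      linarith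
  refine ⟨hXm.aestronglyMeasurable, ?_⟩
  rw [hasFiniteIntegral_iff_norm]
  have hb : ∫⁻ ω, ENNReal.ofReal ‖X ω‖ ∂μ
      ≤ ∫⁻ ω, (ENNReal.ofReal c + ENNReal.ofReal (Φ (|X ω|))) ∂μ := by
    apply lintegral_mono; intro ω
    dsimp only
    rw [Real.norm_eq_abs, ← ENNReal.ofReal_add hc0 (hΦ.2.2.2 _ (abs_nonneg _))]
    exact ENNReal.ofReal_le_ofReal (hpt ω)
  have hmeas : Measurable fun ω => ENNReal.ofReal (Φ (|X ω|)) :=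
    (phi_comp_measurable hΦ hXm.abs (fun ω => abs_nonneg _)).ennreal_ofReal
  have heq : (fun ω => ENNReal.ofReal (Φ (|X ω|)))
      = fun ω => ENNReal.ofReal (Φ (|X ω| / 1)) := by
    funext ω; rw [div_one]
  calc ∫⁻ ω, ENNReal.ofReal ‖X ω‖ ∂μ
      ≤ ∫⁻ ω, (ENNReal.ofReal c + ENNReal.ofReal (Φ (|X ω|))) ∂μ := hb
    _ = ENNReal.ofReal c * μ Set.univ + ∫⁻ ω, ENNReal.ofReal (Φ (|X ω|)) ∂μ := by
        rw [lintegral_add_right _ hmeas, lintegral_const]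
    _ < ⊤ := by
        rw [measure_univ, mul_one, heq]
        exact ENNReal.add_lt_top.mpr ⟨ENNReal.ofReal_lt_top, lt_top_iff_ne_top.mpr hfin⟩

lemma exists_trunc_modular (hΦ : IsOrliczFunction Φ) {X : Ω → ℝ} (hXm : Measurable X)
    {l : ℝ} (hl : 0 < l) (hfin : modular Φ μ X l ≠ ⊤) {η : ℝ≥0∞} (hη : 0 < η) :
    ∃ n : ℕ, modular Φ μ (fun ω => X ω - (if |X ω| ≤ (n:ℝ) then X ω else 0)) l ≤ η := by
  have hRm : ∀ n : ℕ, Measurable (fun ω => X ω - (if |X ω| ≤ (n:ℝ) then X ω else 0)) :=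
    fun n => hXm.sub (Measurable.ite (measurableSet_le hXm.abs measurable_const)
      hXm measurable_const)
  have hRle : ∀ (n : ℕ) (ω : Ω), |X ω - (if |X ω| ≤ (n:ℝ) then X ω else 0)| ≤ |X ω| := by
    intro n ω; split <;> simp [abs_nonneg]
  have hFm : ∀ n : ℕ, Measurable fun ω =>
      ENNReal.ofReal (Φ (|X ω - (if |X ω| ≤ (n:ℝ) then X ω else 0)| / l)) :=
    fun n => (phi_comp_measurable hΦ ((hRm n).abs.div_const _)
      (fun ω => by positivity)).ennreal_ofReal
  have hdom : ∀ n : ℕ, (fun ω =>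
        ENNReal.ofReal (Φ (|X ω - (if |X ω| ≤ (n:ℝ) then X ω else 0)| / l)))
      ≤ᵐ[μ] fun ω => ENNReal.ofReal (Φ (|X ω| / l)) := by
    intro n
    filter_upwards with ω
    refine ENNReal.ofReal_le_ofReal (hΦ.2.1 (Set.mem_Ici.mpr (by positivity))
      (Set.mem_Ici.mpr (by positivity)) ?_)
    exact (div_le_div_iff_of_pos_right hl).mpr (hRle n ω)
  have htend : ∀ᵐ ω ∂μ, Filter.Tendsto (fun n : ℕ =>
      ENNReal.ofReal (Φ (|X ω - (if |X ω| ≤ (n:ℝ) then X ω else 0)| / l)))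
      Filter.atTop (nhds ((fun _ : Ω => (0:ℝ≥0∞)) ω)) := by
    filter_upwards with ω
    obtain ⟨N, hN⟩ := exists_nat_ge |X ω|
    have hev : ∀ᶠ n : ℕ in Filter.atTop, ENNReal.ofReal
        (Φ (|X ω - (if |X ω| ≤ (n:ℝ) then X ω else 0)| / l)) = 0 := by
      rw [Filter.eventually_atTop]
      refine ⟨N, fun n hn => ?_⟩
      have : |X ω| ≤ (n:ℝ) := le_trans hN (by exact_mod_cast hn)
      rw [if_pos this]
      simp [hΦ.2.2.1]
    exact Filter.Tendsto.congr' (hev.mono fun n h => h.symm) tendsto_const_nhds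
  have hto := tendsto_lintegral_of_dominated_convergence _ hFm hdom hfin htend
  rw [lintegral_zero] at hto
  obtain ⟨n, hn⟩ := (hto.eventually_lt_const hη).exists
  exact ⟨n, hn.le⟩

lemma exists_simple_approx {X : Ω → ℝ} (hXm : Measurable X) {c δ : ℝ}
    (hc : ∀ ω, |X ω| ≤ c) (hδ : 0 < δ) :
    ∃ Z : Ω → ℝ, Measurable Z ∧ (Set.range Z).Finite ∧ ∀ ω, |X ω - Z ω| ≤ δ := by
  refine ⟨fun ω => δ * (⌊X ω / δ⌋ : ℝ), ?_, ?_, ?_⟩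
  · exact (measurable_from_top.comp ((hXm.div_const δ).floor)).const_mul δ
  · apply Set.Finite.subset ((Set.finite_Icc ⌊-c/δ⌋ ⌊c/δ⌋).image (fun k : ℤ => δ * (k:ℝ)))
    rintro _ ⟨ω, rfl⟩
    refine Set.mem_image_of_mem _ (Set.mem_Icc.mpr ⟨Int.floor_mono ?_, Int.floor_mono ?_⟩)
    · exact (div_le_div_iff_of_pos_right hδ).mpr (neg_le_of_abs_le (hc ω))
    · exact (div_le_div_iff_of_pos_right hδ).mpr (le_of_abs_le (hc ω))
  · intro ω
    have h1 : δ * (⌊X ω / δ⌋ : ℝ) ≤ X ω := by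
      have := mul_le_mul_of_nonneg_left (Int.floor_le (X ω / δ)) hδ.le
      rwa [mul_div_cancel₀ _ hδ.ne'] at this
    have h2 : X ω < δ * (⌊X ω / δ⌋ : ℝ) + δ := by
      have := mul_lt_mul_of_pos_left (Int.lt_floor_add_one (X ω / δ)) hδ
      rw [mul_add, mul_one, mul_div_cancel₀ _ hδ.ne'] at this
      exact this
    rw [abs_le]
    constructor <;> linarith

lemma bounded_of_finite_range {Z : Ω → ℝ} (h : (Set.range Z).Finite) :
    ∃ c : ℝ, ∀ ω, |Z ω| ≤ c := by
  obtain ⟨c, hc⟩ := (h.image abs).bddAbove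
  exact ⟨c, fun ω => hc (Set.mem_image_of_mem _ (Set.mem_range_self ω))⟩

end HeartAux

section SimplePart
variable {Ω : Type*} [MeasurableSpace Ω] {μ : Measure Ω}

lemma exists_partition_of_simple [IsProbabilityMeasure μ] {Z : Ω → ℝ}
    (hZm : Measurable Z) (hZr : (Set.range Z).Finite) :
    ∃ (Z' : Ω → ℝ) (π₀ : Finset (Set Ω)), IsFinPartition μ π₀ ∧ Z' =ᵐ[μ] Z ∧
      (Set.range Z').Finite ∧
      Measurable[MeasurableSpace.generateFrom (π₀ : Set (Set Ω))] Z' := by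
  classical
  set V : Finset ℝ := hZr.toFinset with hV
  have hVmem : ∀ ω, Z ω ∈ V := fun ω => hZr.mem_toFinset.mpr (Set.mem_range_self ω)
  set N : Set Ω := ⋃ v ∈ V.filter (fun v => μ (Z ⁻¹' {v}) = 0), Z ⁻¹' {v} with hNdef
  have hNm : MeasurableSet N :=
    Finset.measurableSet_biUnion _ fun v _ => hZm (measurableSet_singleton v)
  have hNnull : μ N = 0 := by
    refine le_antisymm (le_trans (measure_biUnion_finset_le _ _) ?_) zero_le
    rw [Finset.sum_eq_zero (fun v hv => (Finset.mem_filter.mp hv).2)]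
  have hmemN : ∀ ω ∈ N, μ (Z ⁻¹' {Z ω}) = 0 := by
    intro ω hω
    simp only [hNdef, Set.mem_iUnion, exists_prop] at hω
    obtain ⟨v, hv, hωv⟩ := hω
    have hZv : Z ω = v := hωv
    rw [hZv]
    exact (Finset.mem_filter.mp hv).2
  have hNtotal : ∀ ω, ω ∉ N → μ (Z ⁻¹' {Z ω}) ≠ 0 := by
    intro ω hω h0
    exact hω (Set.mem_biUnion (Finset.mem_filter.mpr ⟨hVmem ω, h0⟩) rfl)
  set Vp : Finset ℝ := V.filter (fun v => μ (Z ⁻¹' {v}) ≠ 0) with hVp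
  have hVpne : Vp.Nonempty := by
    by_contra h
    rw [Finset.not_nonempty_iff_eq_empty] at h
    have hall : ∀ ω, ω ∈ N := by
      intro ω
      have hnot : Z ω ∉ Vp := h ▸ Finset.notMem_empty _
      have h0 : μ (Z ⁻¹' {Z ω}) = 0 := by
        by_contra h0
        exact hnot (Finset.mem_filter.mpr ⟨hVmem ω, h0⟩)
      exact Set.mem_biUnion (Finset.mem_filter.mpr ⟨hVmem ω, h0⟩) rfl
    have : μ Set.univ = 0 := measure_mono_null (fun ω _ => hall ω) hNnull
    rw [measure_univ] at this
    exact one_ne_zero this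
  obtain ⟨v₀, hv₀⟩ := hVpne
  set Z' : Ω → ℝ := fun ω => if ω ∈ N then v₀ else Z ω with hZ'def
  have hZ'm : Measurable Z' := Measurable.ite hNm measurable_const hZm
  have hZ'ae : Z' =ᵐ[μ] Z := by
    refine ae_iff.mpr (measure_mono_null (fun ω hω => ?_) hNnull)
    by_contra hn
    exact hω (if_neg hn)
  have hZ'mem : ∀ ω, Z' ω ∈ Vp := by
    intro ω
    by_cases hω : ω ∈ N
    · simp only [hZ'def, if_pos hω]; exact hv₀
    · simp only [hZ'def, if_neg hω]
      exact Finset.mem_filter.mpr ⟨hVmem ω, hNtotal ω hω⟩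
  set π₀ : Finset (Set Ω) := Vp.image (fun v => Z' ⁻¹' {v}) with hπ₀def
  have hpre : ∀ v ∈ Vp, Z ⁻¹' {v} ⊆ Z' ⁻¹' {v} := by
    intro v hv ω hω
    have hZω : Z ω = v := hω
    have hωN : ω ∉ N := fun hn => (Finset.mem_filter.mp hv).2 (hZω ▸ hmemN ω hn)
    show Z' ω = v
    rw [hZ'def]
    simp only [if_neg hωN]
    exact hZω
  have hpart : IsFinPartition μ π₀ := by
    refine ⟨?_, ?_, ?_, ?_⟩
    · intro A hA
      obtain ⟨v, _, rfl⟩ := Finset.mem_image.mp hA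
      exact hZ'm (measurableSet_singleton v)
    · intro A hA
      obtain ⟨v, hv, rfl⟩ := Finset.mem_image.mp hA
      exact lt_of_lt_of_le (pos_iff_ne_zero.mpr (Finset.mem_filter.mp hv).2)
        (measure_mono (hpre v hv))
    · intro A hA B hB hne
      obtain ⟨v, hv, rfl⟩ := Finset.mem_image.mp (Finset.mem_coe.mp hA)
      obtain ⟨w, hw, rfl⟩ := Finset.mem_image.mp (Finset.mem_coe.mp hB)
      have hvw : v ≠ w := fun h => hne (by rw [h])
      refine Set.disjoint_left.mpr fun ω h1 h2 => hvw ?_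
      have e1 : Z' ω = v := h1
      have e2 : Z' ω = w := h2
      rw [← e1, e2]
    · apply Set.eq_univ_of_forall
      intro ω
      exact Set.mem_sUnion.mpr ⟨Z' ⁻¹' {Z' ω},
        Finset.mem_coe.mpr (Finset.mem_image_of_mem _ (hZ'mem ω)), rfl⟩
  have hrange : (Set.range Z').Finite := by
    refine Set.Finite.subset Vp.finite_toSet ?_
    rintro _ ⟨ω, rfl⟩
    exact Finset.mem_coe.mpr (hZ'mem ω)
  have hmeas : Measurable[MeasurableSpace.generateFrom (π₀ : Set (Set Ω))] Z' := by
    intro t _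
    have hpreim : Z' ⁻¹' t = ⋃ v ∈ Vp.filter (fun v => v ∈ t), Z' ⁻¹' {v} := by
      ext ω
      simp only [Set.mem_preimage, Set.mem_iUnion, exists_prop, Finset.mem_filter]
      constructor
      · intro h; exact ⟨Z' ω, ⟨hZ'mem ω, h⟩, rfl⟩
      · rintro ⟨v, ⟨_, hvt⟩, hωv⟩
        have : Z' ω = v := hωv
        rw [this]; exact hvt
    rw [hpreim]
    exact Finset.measurableSet_biUnion _ fun v hv =>
      MeasurableSpace.measurableSet_generateFrom
        (Finset.mem_coe.mpr (Finset.mem_image_of_mem _ (Finset.mem_filter.mp hv).1))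
  exact ⟨Z', π₀, hpart, hZ'ae, hrange, hmeas⟩

end SimplePart

end Aux

/-- the net `(E[X|π])_π` converges to `X` in the Luxemburg norm along the
directed set of finite measurable partitions if and only if `X` belongs to the Orlicz
heart `H^Φ`. -/
theorem condexp_net_norm_converges_iff_memHeart
    {Ω : Type*} [MeasurableSpace Ω] (μ : Measure Ω) [IsProbabilityMeasure μ]
    (Φ : ℝ → ℝ) (hΦ : IsOrliczFunction Φ) (hΦ' : StandingAssumptions Φ)
    (X : Ω → ℝ) (hX : MemOrlicz Φ μ X) :
    (∀ ε : ℝ, 0 < ε → ∃ π₀ : Finset (Set Ω), IsFinPartition μ π₀ ∧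
      ∀ π : Finset (Set Ω), IsFinPartition μ π → Refines π π₀ →
        luxNorm Φ μ (fun ω => partCE μ X π ω - X ω) ≤ ENNReal.ofReal ε) ↔
    MemHeart Φ μ X := by
  classical
  constructor
  · -- norm convergence implies membership in the heart
    intro h
    refine ⟨hX.1, fun l hl => ?_⟩
    obtain ⟨π₀, hπ₀, hconv⟩ := h (l/4) (by linarith)
    have hD := hconv π₀ hπ₀ (fun A hA => ⟨A, hA, subset_rfl⟩)
    have hlt : luxNorm Φ μ (fun ω => partCE μ X π₀ ω - X ω) < ENNReal.ofReal (l/2) :=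
      lt_of_le_of_lt hD ((ENNReal.ofReal_lt_ofReal_iff (by linarith)).mpr (by linarith))
    unfold luxNorm at hlt
    obtain ⟨a, ha, halt⟩ := sInf_lt_iff.mp hlt
    obtain ⟨ha0, haT, hamod⟩ := ha
    have haR : a.toReal ≤ l/2 := by
      have h1 := (ENNReal.toReal_lt_toReal haT ENNReal.ofReal_ne_top).mpr halt
      rw [ENNReal.toReal_ofReal (by linarith)] at h1
      exact h1.le
    have haRpos : 0 < a.toReal := ENNReal.toReal_pos ha0.ne' haT
    have hmodD : modular Φ μ (fun ω => partCE μ X π₀ ω - X ω) (l/2) ≤ 1 :=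
      le_trans (modular_scale_mono hΦ haRpos haR) hamod
    have hm : MeasurableSpace.generateFrom ((π₀ : Set (Set Ω))) ≤ ‹MeasurableSpace Ω› :=
      MeasurableSpace.generateFrom_le fun A hA => hπ₀.1 A (Finset.mem_coe.mp hA)
    have hCEm : Measurable (partCE μ X π₀) :=
      (stronglyMeasurable_condExp.mono hm).measurable
    have hCEfin : modular Φ μ (partCE μ X π₀) (l/2) ≠ ⊤ := by
      by_cases hint : Integrable X μ
      · have hpp := pproj_ae_eq_condexp hπ₀ hint
        have : modular Φ μ (partCE μ X π₀) (l/2) = modular Φ μ (pproj μ X π₀) (l/2) :=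
          (modular_congr_ae hpp (l/2)).symm
        rw [this, modular_pproj hπ₀]
        exact (ENNReal.sum_lt_top.mpr fun B _ =>
          ENNReal.mul_lt_top ENNReal.ofReal_lt_top (measure_lt_top μ B)).ne
      · have hzero : partCE μ X π₀ = 0 := condExp_of_not_integrable hint
        rw [hzero]
        simp [modular, hΦ.2.2.1]
    have hXeq : (fun ω => partCE μ X π₀ ω + (X ω - partCE μ X π₀ ω)) = X := by
      funext ω; ring
    have h1 : modular Φ μ X l
        ≤ 2⁻¹ * modular Φ μ (partCE μ X π₀) (l/2)
          + 2⁻¹ * modular Φ μ (fun ω => X ω - partCE μ X π₀ ω) (l/2) := by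
      calc modular Φ μ X l
          = modular Φ μ (fun ω => partCE μ X π₀ ω + (X ω - partCE μ X π₀ ω)) l := by
            rw [hXeq]
        _ ≤ _ := modular_add_le hΦ hCEm (hX.1.sub hCEm) hl
    have h2 : modular Φ μ (fun ω => X ω - partCE μ X π₀ ω) (l/2)
        = modular Φ μ (fun ω => partCE μ X π₀ ω - X ω) (l/2) := by
      apply lintegral_congr; intro ω; rw [abs_sub_comm]
    rw [h2] at h1
    refine lt_of_le_of_lt h1 (ENNReal.add_lt_top.mpr ⟨?_, ?_⟩)
    · exact ENNReal.mul_lt_top (by norm_num) (lt_top_iff_ne_top.mpr hCEfin)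
    · exact ENNReal.mul_lt_top (by norm_num) (lt_of_le_of_lt hmodD (by norm_num))
  · -- membership in the heart implies norm convergence
    intro hH ε hε
    have hmod1 : modular Φ μ X 1 ≠ ⊤ := (hH.2 1 one_pos).ne
    have hXint : Integrable X μ := integrable_of_modular_fin hΦ hΦ' hH.1 hmod1
    have hε4 : (0:ℝ) < ε/4 := by linarith
    have hε2 : (0:ℝ) < ε/2 := by linarith
    obtain ⟨n, hn⟩ := exists_trunc_modular hΦ hH.1 hε4 (hH.2 (ε/4) hε4).ne
      (by norm_num : (0:ℝ≥0∞) < 2⁻¹)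
    set Xn : Ω → ℝ := fun ω => if |X ω| ≤ (n:ℝ) then X ω else 0 with hXndef
    have hXnm : Measurable Xn :=
      Measurable.ite (measurableSet_le hH.1.abs measurable_const) hH.1 measurable_const
    have hXnb : ∀ ω, |Xn ω| ≤ (n:ℝ) := by
      intro ω
      rw [hXndef]
      dsimp only
      split
      · assumption
      · simpa using (Nat.cast_nonneg n)
    set δ : ℝ := (ε/4) * min 1 (1 / (2 * (Φ 1 + 1))) with hδdef
    have hΦ1pos : (0:ℝ) < Φ 1 + 1 := by
      have := hΦ.2.2.2 1 zero_le_one; linarith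
    have hminpos : (0:ℝ) < min 1 (1 / (2 * (Φ 1 + 1))) := lt_min one_pos (by positivity)
    have hδpos : 0 < δ := mul_pos hε4 hminpos
    have hδle : Φ (δ / (ε/4)) ≤ 2⁻¹ := by
      have h1 : δ / (ε/4) = min 1 (1 / (2 * (Φ 1 + 1))) := by
        rw [hδdef, mul_comm, mul_div_assoc, div_self hε4.ne', mul_one]
      have h2 : Φ (min 1 (1 / (2 * (Φ 1 + 1))))
          ≤ min 1 (1 / (2 * (Φ 1 + 1))) * Φ 1 :=
        phi_le_linear_s19 hΦ hminpos.le (min_le_left _ _)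
      have h3 : min 1 (1 / (2 * (Φ 1 + 1))) * Φ 1 ≤ (1 / (2 * (Φ 1 + 1))) * Φ 1 :=
        mul_le_mul_of_nonneg_right (min_le_right _ _) (hΦ.2.2.2 1 zero_le_one)
      have h4 : (1 / (2 * (Φ 1 + 1))) * Φ 1 ≤ 2⁻¹ := by
        rw [div_mul_eq_mul_div, one_mul, div_le_iff₀ (by positivity)]
        ring_nf
        nlinarith [hΦ.2.2.2 1 zero_le_one]
      rw [h1]
      linarith
    obtain ⟨Z, hZm, hZr, hZδ⟩ := exists_simple_approx hXnm hXnb hδpos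
    obtain ⟨Z', π₀, hπ₀, hZ'ae, hZ'r, hZ'meas0⟩ := exists_partition_of_simple (μ := μ) hZm hZr
    refine ⟨π₀, hπ₀, fun π hπ href => ?_⟩
    have hm : MeasurableSpace.generateFrom ((π : Set (Set Ω))) ≤ ‹MeasurableSpace Ω› :=
      MeasurableSpace.generateFrom_le fun A hA => hπ.1 A (Finset.mem_coe.mp hA)
    haveI : SigmaFinite (μ.trim hm) := inferInstance
    have hle0 : MeasurableSpace.generateFrom ((π₀ : Set (Set Ω)))
        ≤ MeasurableSpace.generateFrom ((π : Set (Set Ω))) :=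
      generateFrom_le_of_refines hπ₀ hπ href
    obtain ⟨c, hc⟩ := bounded_of_finite_range hZ'r
    have hZ'm : Measurable Z' := (hZ'meas0.mono hle0 le_rfl).mono hm le_rfl
    have hZ'int : Integrable Z' μ :=
      Integrable.mono' (integrable_const c) hZ'm.aestronglyMeasurable
        (Filter.Eventually.of_forall fun ω => by rw [Real.norm_eq_abs]; exact hc ω)
    have hZ'sm : StronglyMeasurable[MeasurableSpace.generateFrom ((π : Set (Set Ω)))] Z' :=
      ((hZ'meas0.mono hle0 le_rfl)).stronglyMeasurable
    set W : Ω → ℝ := fun ω => X ω - Z' ω with hWdef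
    have hWm : Measurable W := hH.1.sub hZ'm
    have hWint : Integrable W μ := hXint.sub hZ'int
    have hXsum : X = fun ω => W ω + Z' ω := by
      funext ω; simp only [hWdef]; ring
    have hWadd : (fun ω => W ω + Z' ω) = W + Z' := rfl
    have h2 : μ[W + Z' | MeasurableSpace.generateFrom ((π : Set (Set Ω)))]
        =ᵐ[μ] μ[W | MeasurableSpace.generateFrom ((π : Set (Set Ω)))]
          + μ[Z' | MeasurableSpace.generateFrom ((π : Set (Set Ω)))] :=
      condExp_add hWint hZ'int _
    have h3 : μ[Z' | MeasurableSpace.generateFrom ((π : Set (Set Ω)))] = Z' :=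
      condExp_of_stronglyMeasurable hm hZ'sm hZ'int
    rw [h3] at h2
    have h4 : pproj μ W π =ᵐ[μ] μ[W | MeasurableSpace.generateFrom ((π : Set (Set Ω)))] :=
      pproj_ae_eq_condexp hπ hWint
    have hCE : partCE μ X π =ᵐ[μ] fun ω => pproj μ W π ω + Z' ω := by
      unfold partCE
      rw [hXsum, hWadd]
      filter_upwards [h2, h4] with ω h2ω h4ω
      rw [h2ω, Pi.add_apply, ← h4ω]
    have hWae : W =ᵐ[μ] fun ω => (X ω - Xn ω) + (Xn ω - Z ω) := by
      filter_upwards [hZ'ae] with ω hω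
      simp only [hWdef]
      rw [hω]; ring
    have hW2 : modular Φ μ W (ε/2)
        = modular Φ μ (fun ω => (X ω - Xn ω) + (Xn ω - Z ω)) (ε/2) :=
      modular_congr_ae hWae _
    have hsplit2 := modular_add_le (μ := μ) hΦ (hH.1.sub hXnm) (hXnm.sub hZm) hε2
    have he24 : (ε/2)/2 = ε/4 := by ring
    rw [he24] at hsplit2
    have hb1 : modular Φ μ (fun ω => X ω - Xn ω) (ε/4) ≤ 2⁻¹ := hn
    have hb2 : modular Φ μ (fun ω => Xn ω - Z ω) (ε/4) ≤ 2⁻¹ := by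
      refine le_trans (modular_le_of_bound hΦ hδpos.le hε4
        (Filter.Eventually.of_forall hZδ)) ?_
      calc ENNReal.ofReal (Φ (δ/(ε/4))) ≤ ENNReal.ofReal 2⁻¹ :=
            ENNReal.ofReal_le_ofReal hδle
        _ = 2⁻¹ := ofReal_half
    have hWmod : modular Φ μ W (ε/2) ≤ 1 := by
      rw [hW2]
      refine le_trans hsplit2 (le_trans (add_le_add (mul_le_mul_right hb1 _)
        (mul_le_mul_right hb2 _)) ?_)
      rw [← mul_add, ENNReal.inv_two_add_inv_two, mul_one]
      exact ENNReal.inv_le_one.mpr one_le_two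
    have hWfin : modular Φ μ W (ε/2) ≠ ⊤ :=
      (lt_of_le_of_lt hWmod ENNReal.one_lt_top).ne
    have hjensen : modular Φ μ (pproj μ W π) (ε/2) ≤ modular Φ μ W (ε/2) :=
      modular_pproj_le hΦ hπ hWm hWint hε2 hWfin
    have hDae : (fun ω => partCE μ X π ω - X ω)
        =ᵐ[μ] fun ω => pproj μ W π ω + (- W ω) := by
      filter_upwards [hCE] with ω hω
      rw [hω]
      simp only [hWdef]
      ring
    have hmodD : modular Φ μ (fun ω => partCE μ X π ω - X ω) ε ≤ 1 := by
      rw [modular_congr_ae hDae ε]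
      refine le_trans (modular_add_le hΦ (pproj_measurable hπ) hWm.neg hε) ?_
      have hneg : modular Φ μ (fun ω => - W ω) (ε/2) = modular Φ μ W (ε/2) :=
        lintegral_congr fun ω => by rw [abs_neg]
      rw [show modular Φ μ (-W) (ε/2) = modular Φ μ W (ε/2) from hneg]
      refine le_trans (add_le_add (mul_le_mul_right (le_trans hjensen hWmod) _)
        (mul_le_mul_right hWmod _)) ?_
      rw [mul_one, ENNReal.inv_two_add_inv_two]
    unfold luxNorm
    refine sInf_le ⟨ENNReal.ofReal_pos.mpr hε, ENNReal.ofReal_ne_top, ?_⟩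
    rw [ENNReal.toReal_ofReal hε.le]
    exact hmodD

end OrliczPaper
end
end
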